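/- arXiv:2101.07550 — 7 statements merged into one kernel-verified Lean document; each statement's English description precedes it below -/
import Mathlib

section
/- Let G be a finite simple graph whose vertex set is partitioned into k cliques V_1,…,V_k, let A ≥ 1 be an integer, and let G'_A be the associated constructed graph. If G has an independent set of size at least k, then G'_A has a minimal dominating set of size at least A·k. -/
/-- `D` is a dominating set of `G`: every vertex belongs to `D` or has a neighbor in `D`. -/
def Dominates {V : Type*} (G : SimpleGraph V) (D : Set V) : Prop :=
  ∀ v : V, v ∈ D ∨ ∃ u ∈ D, G.Adj u v

/-- `D` is a minimal dominating set of `G`: dominating, and no proper subset dominates. -/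
def MinimalDominatingSet {V : Type*} (G : SimpleGraph V) (D : Set V) : Prop :=
  Dominates G D ∧ ∀ D' : Set V, D' ⊂ D → ¬ Dominates G D'

/-- `I` is an independent set of `G`: no two of its vertices are adjacent. -/
def IndepSet {V : Type*} (G : SimpleGraph V) (I : Set V) : Prop :=
  ∀ u ∈ I, ∀ v ∈ I, ¬ G.Adj u v

/-- The constructed graph `G'_A`.  Vertices are the pairs `(u, a)` with `u ∈ V(G)`,
`1 ≤ a ≤ A` (the copy `(u, a)` lies in the independent set `Z_u`), together with the
vertices `z_1, …, z_k`.  Two vertices `(u, a)`, `(v, b)` are adjacent iff `uv ∈ E(G)`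
(in particular `u ≠ v`); `z_i` is adjacent exactly to the vertices `(u, a)` with
`u ∈ V_i` (i.e. `c u = i`); the `z_i` are pairwise non-adjacent.  The partition of
`V(G)` into the `k` cliques `V_1, …, V_k` is encoded by the map `c : V → Fin k`. -/
def primeGraph {V : Type*} {k : ℕ} (G : SimpleGraph V) (c : V → Fin k) (A : ℕ) :
    SimpleGraph ((V × Fin A) ⊕ Fin k) :=
  SimpleGraph.fromRel fun x y =>
    match x, y with
    | Sum.inl (u, _), Sum.inl (v, _) => G.Adj u v
    | Sum.inl (u, _), Sum.inr i => c u = i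
    | _, _ => False

theorem stmt5 {V : Type*} [Fintype V] (G : SimpleGraph V) (k : ℕ) (c : V → Fin k)
    (hclique : ∀ u v : V, u ≠ v → c u = c v → G.Adj u v)
    (hsurj : Function.Surjective c) (A : ℕ) (hA : 1 ≤ A)
    (hI : ∃ I : Set V, IndepSet G I ∧ k ≤ I.ncard) :
    ∃ D : Set ((V × Fin A) ⊕ Fin k),
      MinimalDominatingSet (primeGraph G c A) D ∧ A * k ≤ D.ncard := by
  obtain ⟨I, hInd, hk⟩ := hI
  have hIfin : I.Finite := Set.toFinite I
  -- c is injective on I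
  have hinj : Set.InjOn c I := by
    intro u hu v hv h
    by_contra hne
    exact hInd u hu v hv (hclique u v hne h)
  -- |I| ≤ k hence = k
  have hle : I.ncard ≤ k := by
    have := Set.ncard_le_ncard_of_injOn c (fun x _ => Set.mem_univ (c x)) hinj
      (Set.finite_univ)
    simpa [Set.ncard_univ] using this
  have hcard : I.ncard = k := le_antisymm hle hk
  -- c restricted to I is surjective onto Fin k
  have hsurjI : ∀ i : Fin k, ∃ u ∈ I, c u = i := by
    intro i
    have himg : (hIfin.toFinset.image c).card = k := by
      rw [Finset.card_image_of_injOn (by simpa using hinj)]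
      rw [← Set.ncard_eq_toFinset_card I hIfin]; exact hcard
    have : hIfin.toFinset.image c = Finset.univ :=
      Finset.eq_univ_of_card _ (by simp [himg])
    have : i ∈ hIfin.toFinset.image c := this ▸ Finset.mem_univ i
    obtain ⟨u, hu, hcu⟩ := Finset.mem_image.mp this
    exact ⟨u, (Set.Finite.mem_toFinset hIfin).mp hu, hcu⟩
  refine ⟨Sum.inl '' (I ×ˢ (Set.univ : Set (Fin A))), ⟨?_, ?_⟩, ?_⟩
  · -- Dominates
    intro x
    match x with
    | Sum.inl (v, b) =>
      by_cases hv : v ∈ I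
      · exact Or.inl ⟨(v, b), ⟨hv, Set.mem_univ b⟩, rfl⟩
      · obtain ⟨u, hu, hcu⟩ := hsurjI (c v)
        have hne : u ≠ v := fun h => hv (h ▸ hu)
        refine Or.inr ⟨Sum.inl (u, b), ⟨(u, b), ⟨hu, Set.mem_univ b⟩, rfl⟩, ?_⟩
        simp only [primeGraph, SimpleGraph.fromRel_adj]
        exact ⟨by simp [hne], Or.inl (hclique u v hne hcu)⟩
    | Sum.inr i =>
      obtain ⟨u, hu, hcu⟩ := hsurjI i
      refine Or.inr ⟨Sum.inl (u, ⟨0, hA⟩), ⟨(u, ⟨0, hA⟩), ⟨hu, Set.mem_univ _⟩, rfl⟩, ?_⟩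
      simp only [primeGraph, SimpleGraph.fromRel_adj]
      exact ⟨by simp, Or.inl hcu⟩
  · -- Minimality
    intro D' hss hdom
    have hsub := hss.subset
    obtain ⟨x, hxD, hxD'⟩ := (Set.ssubset_iff_of_subset hsub).mp hss
    obtain ⟨⟨u, a⟩, ⟨hu, -⟩, rfl⟩ := hxD
    rcases hdom (Sum.inl (u, a)) with h | ⟨y, hy, hadj⟩
    · exact hxD' h
    · obtain ⟨⟨v, b⟩, ⟨hv, -⟩, rfl⟩ := hsub hy
      simp only [primeGraph, SimpleGraph.fromRel_adj] at hadj
      rcases hadj.2 with h | h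
      · exact hInd v hv u hu h
      · exact hInd u hu v hv h
  · -- cardinality
    have h1 : (Sum.inl '' (I ×ˢ (Set.univ : Set (Fin A))) :
        Set ((V × Fin A) ⊕ Fin k)).ncard = (I ×ˢ (Set.univ : Set (Fin A))).ncard :=
      Set.ncard_image_of_injective _ Sum.inl_injective
    have hfin : (I ×ˢ (Set.univ : Set (Fin A))).Finite := Set.toFinite _
    have h2 : (I ×ˢ (Set.univ : Set (Fin A))).ncard = I.ncard * A := by
      rw [Set.ncard_eq_toFinset_card _ hfin,
        show hfin.toFinset = hIfin.toFinset ×ˢ Finset.univ from by ext x; simp,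
        Finset.card_product, Set.ncard_eq_toFinset_card I hIfin]
      simp
    rw [h1, h2, hcard, Nat.mul_comm]
end

section
/- Let G be a finite simple graph whose vertex set is partitioned into k cliques V_1,…,V_k, and let G'_5 be the associated constructed graph with A = 5. If G'_5 has a minimal dominating set of size at least 5k, then G has an independent set of size at least k. -/
open Finset

namespace MinimalDominatingSet

variable {W : Type*} {H : SimpleGraph W} {D : Set W}

theorem exists_private_neighbor (hD : MinimalDominatingSet H D) {d : W} (hd : d ∈ D) :
    ∃ x, (x = d ∨ H.Adj d x) ∧ ∀ e ∈ D, (e = x ∨ H.Adj e x) → e = d := by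
  have hnot := hD.2 (D \ {d}) (Set.sdiff_singleton_ssubset.mpr hd)
  simp only [Dominates, not_forall, not_or, not_exists, not_and] at hnot
  obtain ⟨x, hxD, hxadj⟩ := hnot
  have hprivate : ∀ e ∈ D, (e = x ∨ H.Adj e x) → e = d := by
    rintro e he (rfl | hex)
    · by_contra hne
      exact hxD ⟨he, hne⟩
    · by_contra hne
      exact hxadj e ⟨he, hne⟩ hex
  refine ⟨x, ?_, hprivate⟩
  rcases hD.1 x with hx | ⟨e, he, hex⟩
  · exact .inl (hprivate x hx (.inl rfl))
  · exact .inr (hprivate e he (.inr hex) ▸ hex)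

theorem not_adj_of_twin (hD : MinimalDominatingSet H D) {d d' : W} (hd : d ∈ D) (hd' : d' ∈ D)
    (hne : d ≠ d') (htwin : ∀ x, H.Adj d x ↔ H.Adj d' x) {e : W} (he : e ∈ D) :
    ¬ H.Adj e d := by
  obtain ⟨x, rfl | hdx, hx⟩ := hD.exists_private_neighbor hd
  · exact fun hed => H.loopless.irrefl _ (hx e he (.inr hed) ▸ hed)
  · exact fun _ => hne (hx d' hd' (.inr ((htwin x).mp hdx))).symm

theorem mem_of_twin (hD : MinimalDominatingSet H D) {d d' : W} (hd : d ∈ D) (hd' : d' ∈ D)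
    (hne : d ≠ d') (htwin : ∀ x, H.Adj d x ↔ H.Adj d' x) {x : W}
    (hx : ∀ y, H.Adj x y ↔ H.Adj d y) : x ∈ D := by
  rcases hD.1 x with hxD | ⟨e, he, hex⟩
  · exact hxD
  · exact absurd ((hx e).mp hex.symm).symm (hD.not_adj_of_twin hd hd' hne htwin he)

end MinimalDominatingSet

section primeGraph

variable {V : Type*} {k A : ℕ} {G : SimpleGraph V} {c : V → Fin k}

@[simp]
theorem primeGraph_adj_inl_inl {u v : V} {a b : Fin A} :
    (primeGraph G c A).Adj (.inl (u, a)) (.inl (v, b)) ↔ G.Adj u v := by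
  simp only [primeGraph, SimpleGraph.fromRel_adj, ne_eq, Sum.inl.injEq, Prod.mk.injEq]
  exact ⟨fun ⟨_, h⟩ => h.elim id G.adj_symm,
    fun h => ⟨fun he => G.loopless.irrefl u (he.1 ▸ h), .inl h⟩⟩

@[simp]
theorem primeGraph_adj_inl_inr {u : V} {a : Fin A} {i : Fin k} :
    (primeGraph G c A).Adj (.inl (u, a)) (.inr i) ↔ c u = i := by
  simp [primeGraph]

@[simp]
theorem primeGraph_adj_inr_inl {u : V} {a : Fin A} {i : Fin k} :
    (primeGraph G c A).Adj (.inr i) (.inl (u, a)) ↔ c u = i := by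
  simp [primeGraph]

@[simp]
theorem primeGraph_not_adj_inr_inr {i j : Fin k} : ¬ (primeGraph G c A).Adj (.inr i) (.inr j) := by
  simp [primeGraph]

theorem primeGraph_adj_copy_iff (u : V) (a b : Fin A) (x : (V × Fin A) ⊕ Fin k) :
    (primeGraph G c A).Adj (.inl (u, a)) x ↔ (primeGraph G c A).Adj (.inl (u, b)) x := by
  rcases x with ⟨v, _⟩ | i <;> simp

def blockOf (c : V → Fin k) : (V × Fin A) ⊕ Fin k → Fin k :=
  Sum.elim (fun p => c p.1) id

def blockPart (c : V → Fin k) (D : Finset ((V × Fin A) ⊕ Fin k)) (j : Fin k) :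
    Finset ((V × Fin A) ⊕ Fin k) :=
  {d ∈ D | blockOf c d = j}

def IsFull (D : Finset ((V × Fin A) ⊕ Fin k)) (u : V) : Prop :=
  ∀ a, .inl (u, a) ∈ D

def HasFullVertex (c : V → Fin k) (D : Finset ((V × Fin A) ⊕ Fin k)) (j : Fin k) : Prop :=
  ∃ u, c u = j ∧ IsFull D u

variable {D : Finset ((V × Fin A) ⊕ Fin k)}

@[simp]
theorem mem_blockPart {d : (V × Fin A) ⊕ Fin k} {j : Fin k} :
    d ∈ blockPart c D j ↔ d ∈ D ∧ blockOf c d = j :=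
  mem_filter

theorem eq_of_mem_of_adj (hD : MinimalDominatingSet (primeGraph G c A) D) {u : V} {a b : Fin A}
    (ha : .inl (u, a) ∈ D) (hb : .inl (u, b) ∈ D) {e : (V × Fin A) ⊕ Fin k} (he : e ∈ D)
    (hadj : (primeGraph G c A).Adj e (.inl (u, a))) : a = b := by
  by_contra hab
  exact hD.not_adj_of_twin ha hb (by simpa using hab) (primeGraph_adj_copy_iff u a b) he hadj

theorem eq_of_mem_of_not_isFull (hD : MinimalDominatingSet (primeGraph G c A) D) {u : V}
    (hu : ¬ IsFull D u) {a b : Fin A} (ha : .inl (u, a) ∈ D) (hb : .inl (u, b) ∈ D) :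
    a = b := by
  by_contra hab
  exact hu fun b' => hD.mem_of_twin ha hb (by simpa using hab) (primeGraph_adj_copy_iff u a b)
    (primeGraph_adj_copy_iff u b' a)

theorem IsFull.not_adj {u : V} (hu : IsFull D u) (hA : 1 < A)
    (hD : MinimalDominatingSet (primeGraph G c A) D) {e : (V × Fin A) ⊕ Fin k} (he : e ∈ D)
    (a : Fin A) : ¬ (primeGraph G c A).Adj e (.inl (u, a)) := by
  have : Nontrivial (Fin A) := Fin.nontrivial_iff_two_le.mpr hA
  obtain ⟨b, hba⟩ := exists_ne a
  exact fun hadj => hba (eq_of_mem_of_adj hD (hu a) (hu b) he hadj).symm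

theorem card_blockPart_le_of_isFull (hclique : ∀ u v : V, u ≠ v → c u = c v → G.Adj u v)
    (hA : 1 < A) (hD : MinimalDominatingSet (primeGraph G c A) D) {u : V} (hu : IsFull D u) :
    #(blockPart c D (c u)) ≤ A := by
  classical
  have hsub : blockPart c D (c u) ⊆ univ.image fun a => .inl (u, a) := by
    rintro (⟨w, b⟩ | i) he
    all_goals
      obtain ⟨he, hblock⟩ := mem_blockPart.mp he
      simp only [blockOf, Sum.elim_inl, Sum.elim_inr, id] at hblock
    · by_cases hwu : w = u
      · simp [hwu]
      · exact absurd (by simpa using hclique w u hwu hblock) (hu.not_adj hA hD he b)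
    · exact absurd (by simpa using hblock.symm) (hu.not_adj hA hD he ⟨0, by omega⟩)
  simpa using (card_le_card hsub).trans card_image_le

theorem exists_other_dominator_of_three_le
    (hclique : ∀ u v : V, u ≠ v → c u = c v → G.Adj u v)
    (hD : MinimalDominatingSet (primeGraph G c A) D) {j : Fin k} (hj : ¬ HasFullVertex c D j)
    (hcard : 3 ≤ #(blockPart c D j)) (d : (V × Fin A) ⊕ Fin k) {x : (V × Fin A) ⊕ Fin k}
    (hx : blockOf c x = j) : ∃ e ∈ D, e ≠ d ∧ (e = x ∨ (primeGraph G c A).Adj e x) := by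
  classical
  rcases x with ⟨v, b⟩ | i
  · simp only [blockOf, Sum.elim_inl] at hx
    obtain ⟨b₀, hb₀⟩ : ∃ b₀, ∀ b', .inl (v, b') ∈ D → b' = b₀ := by
      by_cases h : ∃ b₀, .inl (v, b₀) ∈ D
      · obtain ⟨b₀, hb₀⟩ := h
        have hv : ¬ IsFull D v := fun hv => hj ⟨v, hx, hv⟩
        exact ⟨b₀, fun b' hb' => eq_of_mem_of_not_isFull hD hv hb' hb₀⟩
      · push Not at h
        exact ⟨b, fun b' hb' => absurd hb' (h b')⟩
    obtain ⟨e, he, hed⟩ := exists_mem_notMem_of_card_lt_card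
      (s := {d, .inl (v, b₀)}) (card_le_two.trans_lt hcard)
    rw [mem_blockPart] at he
    simp only [mem_insert, mem_singleton, not_or] at hed
    refine ⟨e, he.1, hed.1, .inr ?_⟩
    rcases e with ⟨w, bw⟩ | i
    · have hwv : w ≠ v := by
        rintro rfl
        exact hed.2 (by rw [hb₀ bw he.1])
      simpa using hclique w v hwv (he.2.trans hx.symm)
    · simpa [blockOf, hx] using he.2.symm
  · simp only [blockOf, Sum.elim_inr, id] at hx
    subst hx
    obtain ⟨e, he, hed⟩ := exists_mem_ne (by omega : 1 < #(blockPart c D i)) d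
    rw [mem_blockPart] at he
    refine ⟨e, he.1, hed, ?_⟩
    rcases e with ⟨w, bw⟩ | i'
    · exact .inr (by simpa [blockOf] using he.2)
    · exact .inl (by simpa [blockOf] using he.2)

def SingletonPartner (G : SimpleGraph V) (c : V → Fin k) (D : Finset ((V × Fin A) ⊕ Fin k))
    (d : (V × Fin A) ⊕ Fin k) (j : Fin k) : Prop :=
  ∃ y, blockPart c D j = {y} ∧ (primeGraph G c A).Adj d y ∧
    ∀ e ∈ D, (primeGraph G c A).Adj e y → e = d

theorem singletonPartner_of_private (hclique : ∀ u v : V, u ≠ v → c u = c v → G.Adj u v)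
    (hD : MinimalDominatingSet (primeGraph G c A) D) {u v : V} {a b : Fin A}
    (hd : .inl (u, a) ∈ D) (huv : G.Adj u v) (hcuv : c u ≠ c v)
    (hx : ∀ e ∈ D, (primeGraph G c A).Adj e (.inl (v, b)) → e = .inl (u, a)) :
    SingletonPartner G c D (.inl (u, a)) (c v) := by
  have hblock : ∀ w bw, .inl (w, bw) ∈ D → c w = c v → w = v := by
    intro w bw hw hcw
    by_contra hwv
    have := hx _ hw (by simpa using hclique w v hwv hcw)
    simp only [Sum.inl.injEq, Prod.mk.injEq] at this
    exact hcuv (this.1 ▸ hcw)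
  have hz : .inr (c v) ∉ D := fun hz => by simpa using hx _ hz (by simp)
  obtain ⟨e, he, hez⟩ := (hD.1 (.inr (c v))).resolve_left hz
  rcases e with ⟨w, bw⟩ | i
  · simp only [primeGraph_adj_inl_inr] at hez
    obtain rfl := hblock w bw he hez
    refine ⟨.inl (w, bw), ?_, by simpa using huv, fun e he' hadj => hx e he' ?_⟩
    · ext e
      simp only [mem_blockPart, mem_singleton]
      refine ⟨fun ⟨he', hb'⟩ => ?_, by rintro rfl; exact ⟨he, rfl⟩⟩
      rcases e with ⟨w', b'⟩ | i
      · simp only [blockOf, Sum.elim_inl] at hb'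
        obtain rfl := hblock w' b' he' hb'
        rw [eq_of_mem_of_adj hD he' he hd (by simpa using huv)]
      · simp only [blockOf, Sum.elim_inr, id] at hb'
        exact absurd (hb' ▸ he') hz
    · exact ((primeGraph_adj_copy_iff w bw b e).mp hadj.symm).symm
  · exact absurd hez primeGraph_not_adj_inr_inr

theorem exists_singletonPartner (hclique : ∀ u v : V, u ≠ v → c u = c v → G.Adj u v)
    (hD : MinimalDominatingSet (primeGraph G c A) D) {j : Fin k} (hj : ¬ HasFullVertex c D j)
    (hcard : 3 ≤ #(blockPart c D j)) {d : (V × Fin A) ⊕ Fin k} (hd : d ∈ blockPart c D j) :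
    ∃ j', SingletonPartner G c D d j' := by
  rw [mem_blockPart] at hd
  obtain ⟨x, hxd, hx⟩ := hD.exists_private_neighbor hd.1
  have hxj : blockOf c x ≠ j := fun hxj => by
    obtain ⟨e, he, hed, hex⟩ := exists_other_dominator_of_three_le hclique hD hj hcard d hxj
    exact hed (hx e he hex)
  have hdx : (primeGraph G c A).Adj d x := hxd.resolve_left fun h => hxj (h ▸ hd.2)
  rcases d with ⟨u, a⟩ | i <;> rcases x with ⟨v, b⟩ | i'
  · simp only [blockOf, Sum.elim_inl] at hd hxj
    exact ⟨c v, singletonPartner_of_private hclique hD hd.1 (by simpa using hdx)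
      (hd.2 ▸ Ne.symm hxj) fun e he hex => hx e he (.inr hex)⟩
  · simp_all [blockOf]
  · simp_all [blockOf]
  · exact absurd hdx primeGraph_not_adj_inr_inr

/-- The discharging rule behind `#D ≤ A * #(blocks with a full vertex) + 2 * #(other blocks)`. -/
def Charges (G : SimpleGraph V) (c : V → Fin k) (D : Finset ((V × Fin A) ⊕ Fin k))
    (d : (V × Fin A) ⊕ Fin k) (j : Fin k) : Prop :=
  (blockOf c d = j ∧ (HasFullVertex c D j ∨ #(blockPart c D j) ≤ 2)) ∨
    SingletonPartner G c D d j

theorem exists_charges (hclique : ∀ u v : V, u ≠ v → c u = c v → G.Adj u v)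
    (hD : MinimalDominatingSet (primeGraph G c A) D) {d : (V × Fin A) ⊕ Fin k} (hd : d ∈ D) :
    ∃ j, Charges G c D d j := by
  by_cases h : HasFullVertex c D (blockOf c d) ∨ #(blockPart c D (blockOf c d)) ≤ 2
  · exact ⟨_, .inl ⟨rfl, h⟩⟩
  · push Not at h
    obtain ⟨j', hj'⟩ :=
      exists_singletonPartner hclique hD h.1 h.2 (mem_blockPart.mpr ⟨hd, rfl⟩)
    exact ⟨j', .inr hj'⟩

open Classical in
theorem card_filter_charges_le (hclique : ∀ u v : V, u ≠ v → c u = c v → G.Adj u v)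
    (hA : 1 < A) (hD : MinimalDominatingSet (primeGraph G c A) D) (j : Fin k) :
    #{d ∈ D | Charges G c D d j} ≤ if HasFullVertex c D j then A else 2 := by
  by_cases hp : ∃ d₀ ∈ D, SingletonPartner G c D d₀ j
  · obtain ⟨d₀, -, y, hy, -, huniq⟩ := hp
    have hsub : {d ∈ D | Charges G c D d j} ⊆ {y, d₀} := by
      intro d hd
      obtain ⟨hdD, hb | ⟨y', hy', hdy, -⟩⟩ := mem_filter.mp hd
      · have hdj : d ∈ blockPart c D j := mem_blockPart.mpr ⟨hdD, hb.1⟩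
        rw [hy, mem_singleton] at hdj
        simp [hdj]
      · rw [hy, singleton_inj] at hy'
        subst hy'
        simp [huniq d hdD hdy]
    exact (card_le_card hsub).trans (card_le_two.trans (by split_ifs <;> omega))
  · push Not at hp
    have hown : ∀ d ∈ {d ∈ D | Charges G c D d j}, d ∈ blockPart c D j ∧
        (HasFullVertex c D j ∨ #(blockPart c D j) ≤ 2) := by
      intro d hd
      obtain ⟨hdD, hb | hsp⟩ := mem_filter.mp hd
      · exact ⟨mem_blockPart.mpr ⟨hdD, hb.1⟩, hb.2⟩
      · exact absurd hsp (hp d hdD)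
    have hsub : {d ∈ D | Charges G c D d j} ⊆ blockPart c D j := fun d hd => (hown d hd).1
    split_ifs with hfull
    · obtain ⟨u, rfl, hu⟩ := hfull
      exact (card_le_card hsub).trans (card_blockPart_le_of_isFull hclique hA hD hu)
    · obtain hempty | ⟨d, hd⟩ := Finset.eq_empty_or_nonempty {d ∈ D | Charges G c D d j}
      · simp [hempty]
      · exact (card_le_card hsub).trans ((hown d hd).2.resolve_left hfull)

theorem hasFullVertex_of_card_le (hclique : ∀ u v : V, u ≠ v → c u = c v → G.Adj u v)
    (hA : 2 < A) (hD : MinimalDominatingSet (primeGraph G c A) D) (hcard : A * k ≤ #D)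
    (j : Fin k) : HasFullVertex c D j := by
  classical
  by_contra hj
  have hbelow (i : Fin k) :
      #(D.bipartiteBelow (Charges G c D) i) ≤ if HasFullVertex c D i then A else 2 := by
    convert card_filter_charges_le hclique (by omega) hD i
    simp only [bipartiteBelow]
  have habove (d) (hd : d ∈ D) : 1 ≤ #(univ.bipartiteAbove (Charges G c D) d) := by
    obtain ⟨i, hi⟩ := exists_charges hclique hD hd
    exact card_pos.mpr ⟨i, mem_filter.mpr ⟨mem_univ i, hi⟩⟩
  refine lt_irrefl (A * k) ?_
  calc
    A * k ≤ #D := hcard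
    _ = ∑ d ∈ D, 1 := card_eq_sum_ones D
    _ ≤ ∑ d ∈ D, #(univ.bipartiteAbove (Charges G c D) d) := sum_le_sum habove
    _ = ∑ i, #(D.bipartiteBelow (Charges G c D) i) :=
      sum_card_bipartiteAbove_eq_sum_card_bipartiteBelow _
    _ < ∑ _i : Fin k, A := by
      refine sum_lt_sum (fun i _ => (hbelow i).trans (by split_ifs <;> omega))
        ⟨j, mem_univ j, (hbelow j).trans_lt ?_⟩
      simp only [hj, if_false]
      omega
    _ = A * k := by simp [mul_comm]

theorem not_adj_of_isFull (hA : 1 < A) (hD : MinimalDominatingSet (primeGraph G c A) D)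
    {u v : V} (hu : IsFull D u) (hv : IsFull D v) : ¬ G.Adj u v := fun huv =>
  hu.not_adj hA hD (hv ⟨0, by omega⟩) ⟨0, by omega⟩ (by simpa using huv.symm)

theorem exists_indepSet_of_card_le (hclique : ∀ u v : V, u ≠ v → c u = c v → G.Adj u v)
    (hA : 2 < A) (hD : MinimalDominatingSet (primeGraph G c A) D) (hcard : A * k ≤ #D) :
    ∃ I : Set V, IndepSet G I ∧ k ≤ I.ncard := by
  choose f hfc hfull using hasFullVertex_of_card_le hclique hA hD hcard
  have hinj : Function.Injective f := fun i j h => by rw [← hfc i, ← hfc j, h]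
  refine ⟨Set.range f, ?_, by simp [Set.ncard_range_of_injective hinj]⟩
  rintro _ ⟨i, rfl⟩ _ ⟨j, rfl⟩
  exact not_adj_of_isFull (by omega) hD (hfull i) (hfull j)

end primeGraph

theorem stmt6_general {V : Type*} [Fintype V] (G : SimpleGraph V) (k : ℕ) (c : V → Fin k)
    (hclique : ∀ u v : V, u ≠ v → c u = c v → G.Adj u v)
    (hD : ∃ D : Set ((V × Fin 5) ⊕ Fin k),
      MinimalDominatingSet (primeGraph G c 5) D ∧ 5 * k ≤ D.ncard) :
    ∃ I : Set V, IndepSet G I ∧ k ≤ I.ncard := by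
  obtain ⟨D, hD, hcard⟩ := hD
  rw [← D.toFinite.coe_toFinset] at hD
  rw [Set.ncard_eq_toFinset_card D] at hcard
  exact exists_indepSet_of_card_le hclique (by norm_num) hD hcard

theorem stmt6 {V : Type*} [Fintype V] (G : SimpleGraph V) (k : ℕ) (c : V → Fin k)
    (hclique : ∀ u v : V, u ≠ v → c u = c v → G.Adj u v)
    (hsurj : Function.Surjective c)
    (hD : ∃ D : Set ((V × Fin 5) ⊕ Fin k),
      MinimalDominatingSet (primeGraph G c 5) D ∧ 5 * k ≤ D.ncard) :
    ∃ I : Set V, IndepSet G I ∧ k ≤ I.ncard :=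
  stmt6_general G k c hclique hD
end

section
/- Let G be a finite simple graph whose vertex set is partitioned into k cliques V_1,…,V_k, and let G'_5 be the associated constructed graph with A = 5. Then G has an independent set of size at least k if and only if G'_5 has a minimal dominating set of size at least 5k. -/
/-!
Every vertex `d` of a minimal dominating set `D` of `G'_A` has a private neighbour: a vertex of its
closed neighbourhood dominated by no other vertex of `D`. Sort the vertices of `D` according to the
block `{z_i} ∪ N(z_i)` containing one of their private neighbours. If `Z_u ⊆ D` for some `u ∈ V_i`,
every private neighbour in block `i` lies in `Z_u`, so block `i` accounts for at most `A` vertices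
of `D`. Otherwise it accounts for at most three: one for `z_i`, and at most two for `N(z_i)`, whose
private neighbours lie over at most two vertices of `V_i` because whatever dominates `z_i`
dominates the copies of all but one vertex of `V_i`. Hence for `A ≥ 4`, `|D| ≥ A k` forces some `u`
with `Z_u ⊆ D` in every clique, and two such vertices are non-adjacent, since the only private
neighbour of a copy of `u` is that copy itself. Conversely, if `I` is independent and meets every
clique, `⋃_{u ∈ I} Z_u` is independent and dominating, hence minimal dominating.
-/

open Set

structure IsPrivateNeighbor {W : Type*} (H : SimpleGraph W) (D : Set W) (d x : W) : Prop where
  mem : d ∈ D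
  dominates : d = x ∨ H.Adj d x
  unique : ∀ e ∈ D, e = x ∨ H.Adj e x → e = d

def privateOwners {W : Type*} (H : SimpleGraph W) (D X : Set W) : Set W :=
  {d | ∃ x ∈ X, IsPrivateNeighbor H D d x}

section PrivateNeighbor

variable {W : Type*} {H : SimpleGraph W} {D : Set W}

lemma IsPrivateNeighbor.eq {d₁ d₂ x : W} (h₁ : IsPrivateNeighbor H D d₁ x)
    (h₂ : IsPrivateNeighbor H D d₂ x) : d₁ = d₂ :=
  h₂.unique d₁ h₁.mem h₁.dominates

lemma MinimalDominatingSet.exists_isPrivateNeighbor (hD : MinimalDominatingSet H D) {d : W}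
    (hd : d ∈ D) : ∃ x, IsPrivateNeighbor H D d x := by
  have hnot := hD.2 _ (sdiff_singleton_ssubset.2 hd)
  simp only [Dominates, not_forall, not_or, not_exists, not_and] at hnot
  obtain ⟨x, hxD, hx⟩ := hnot
  have hxd : x ∈ D → d = x := fun hxD' => by_contra fun hne => hxD ⟨hxD', Ne.symm hne⟩
  refine ⟨x, hd, ?_, fun e he hex => by_contra fun hed => ?_⟩
  · rcases hD.1 x with hxD' | ⟨e, he, hadj⟩
    · exact Or.inl (hxd hxD')
    · by_cases hed : e = d
      · exact Or.inr (hed ▸ hadj)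
      · exact absurd hadj (hx e ⟨he, hed⟩)
  · rcases hex with rfl | hadj
    · exact hxD ⟨he, hed⟩
    · exact hx e ⟨he, hed⟩ hadj

lemma MinimalDominatingSet.privateOwners_univ (hD : MinimalDominatingSet H D) :
    privateOwners H D univ = D := by
  refine Set.ext fun d => ⟨fun ⟨_, _, h⟩ => h.mem, fun hd => ?_⟩
  obtain ⟨x, hx⟩ := hD.exists_isPrivateNeighbor hd
  exact ⟨x, trivial, hx⟩

lemma privateOwners_union (X Y : Set W) :
    privateOwners H D (X ∪ Y) = privateOwners H D X ∪ privateOwners H D Y := by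
  ext d
  simp only [privateOwners, mem_union, mem_ofPred_eq, or_and_right, exists_or]

lemma privateOwners_iUnion {ι : Type*} (X : ι → Set W) :
    privateOwners H D (⋃ i, X i) = ⋃ i, privateOwners H D (X i) := by
  ext d
  simp only [privateOwners, mem_iUnion, mem_ofPred_eq]
  exact ⟨fun ⟨x, ⟨i, hx⟩, h⟩ => ⟨i, x, hx, h⟩, fun ⟨i, x, hx, h⟩ => ⟨x, ⟨i, hx⟩, h⟩⟩

lemma ncard_privateOwners_le {X : Set W} (hX : X.Finite) :
    (privateOwners H D X).ncard ≤ X.ncard := by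
  classical
  let owner : W → W := fun x => if h : ∃ d, IsPrivateNeighbor H D d x then h.choose else x
  have hsub : privateOwners H D X ⊆ owner '' X := by
    rintro d ⟨x, hx, hd⟩
    have h : ∃ d, IsPrivateNeighbor H D d x := ⟨d, hd⟩
    exact ⟨x, hx, by simp only [owner, dif_pos h]; exact h.choose_spec.eq hd⟩
  calc (privateOwners H D X).ncard ≤ (owner '' X).ncard := ncard_le_ncard hsub (hX.image _)
    _ ≤ X.ncard := ncard_image_le hX

lemma IndepSet.minimalDominatingSet (hI : IndepSet H D) (hD : Dominates H D) :
    MinimalDominatingSet H D := by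
  refine ⟨hD, fun D' hD' hdom => ?_⟩
  obtain ⟨d, hd, hd'⟩ := exists_of_ssubset hD'
  rcases hdom d with h | ⟨e, he, hadj⟩
  · exact hd' h
  · exact hI e (hD'.1 he) d hd hadj

end PrivateNeighbor

namespace primeGraph

variable {V : Type*} {k A : ℕ} {G : SimpleGraph V} {c : V → Fin k}

local notation "G′" => primeGraph G c A

def copies (u : V) : Set ((V × Fin A) ⊕ Fin k) := range fun b => .inl (u, b)

@[simp]
lemma adj_inl_inl {u v : V} {a b : Fin A} :
    G′.Adj (.inl (u, a)) (.inl (v, b)) ↔ G.Adj u v := by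
  simp only [primeGraph, SimpleGraph.fromRel_adj, ne_eq, Sum.inl.injEq, Prod.mk.injEq]
  exact ⟨fun ⟨_, h⟩ => h.elim id SimpleGraph.Adj.symm,
    fun h => ⟨fun e => G.ne_of_adj h e.1, Or.inl h⟩⟩

@[simp]
lemma adj_inl_inr {u : V} {a : Fin A} {i : Fin k} :
    G′.Adj (.inl (u, a)) (.inr i) ↔ c u = i := by
  simp [primeGraph]

@[simp]
lemma adj_inr_inl {u : V} {a : Fin A} {i : Fin k} :
    G′.Adj (.inr i) (.inl (u, a)) ↔ c u = i := by
  simp [primeGraph]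

@[simp]
lemma not_adj_inr_inr {i j : Fin k} : ¬ G′.Adj (.inr i) (.inr j) := by
  simp [primeGraph]

lemma adj_inl_copy_right {x : (V × Fin A) ⊕ Fin k} {v : V} {b b' : Fin A}
    (h : G′.Adj x (.inl (v, b))) : G′.Adj x (.inl (v, b')) := by
  rcases x with ⟨u, a⟩ | j <;> simpa using h

lemma adj_inl_copy_left {x : (V × Fin A) ⊕ Fin k} {v : V} {b b' : Fin A}
    (h : G′.Adj (.inl (v, b)) x) : G′.Adj (.inl (v, b')) x :=
  (adj_inl_copy_right h.symm).symm

lemma iUnion_insert_neighborSet_inr :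
    ⋃ i, insert (.inr i) (G′.neighborSet (.inr i)) = univ := by
  refine eq_univ_of_forall fun x => mem_iUnion.2 ?_
  rcases x with ⟨v, b⟩ | i
  · exact ⟨c v, Or.inr (adj_inr_inl (G := G).2 rfl)⟩
  · exact ⟨i, Or.inl rfl⟩

lemma exists_mem_of_indepSet_of_le_ncard (hclique : ∀ u v : V, u ≠ v → c u = c v → G.Adj u v)
    {I : Set V} (hI : IndepSet G I) (hk : k ≤ I.ncard) (i : Fin k) : ∃ u ∈ I, c u = i := by
  have hinj : InjOn c I := fun u hu v hv huv =>
    by_contra fun hne => hI u hu v hv (hclique u v hne huv)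
  have himage : c '' I = univ := eq_of_subset_of_ncard_le (subset_univ _)
    (by rwa [ncard_univ, Nat.card_fin, hinj.ncard_image])
  exact (himage ▸ mem_univ i : i ∈ c '' I)

lemma exists_minimalDominatingSet_of_indepSet
    (hclique : ∀ u v : V, u ≠ v → c u = c v → G.Adj u v) (hA : 0 < A) {I : Set V}
    (hI : IndepSet G I) (hk : k ≤ I.ncard) :
    ∃ D, MinimalDominatingSet G′ D ∧ A * k ≤ D.ncard := by
  refine ⟨.inl '' (I ×ˢ univ), IndepSet.minimalDominatingSet ?_ ?_, ?_⟩
  · rintro _ ⟨⟨u, a⟩, ⟨hu, -⟩, rfl⟩ _ ⟨⟨v, b⟩, ⟨hv, -⟩, rfl⟩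
    simpa using hI u hu v hv
  · rintro (⟨v, b⟩ | i)
    · by_cases hv : v ∈ I
      · exact Or.inl ⟨(v, b), ⟨hv, trivial⟩, rfl⟩
      · obtain ⟨u, hu, hcu⟩ := exists_mem_of_indepSet_of_le_ncard hclique hI hk (c v)
        refine Or.inr ⟨.inl (u, b), ⟨(u, b), ⟨hu, trivial⟩, rfl⟩, adj_inl_inl.2 ?_⟩
        exact hclique u v (fun h => hv (h ▸ hu)) hcu
    · obtain ⟨u, hu, hcu⟩ := exists_mem_of_indepSet_of_le_ncard hclique hI hk i
      exact Or.inr ⟨.inl (u, ⟨0, hA⟩), ⟨(u, ⟨0, hA⟩), ⟨hu, trivial⟩, rfl⟩, adj_inl_inr.2 hcu⟩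
  · rw [ncard_image_of_injective _ Sum.inl_injective, ncard_prod, ncard_univ, Nat.card_fin,
      mul_comm]
    exact Nat.mul_le_mul_right A hk

variable {D : Set ((V × Fin A) ⊕ Fin k)}

lemma copies_subset_of_isPrivateNeighbor_self (hD : Dominates G′ D) {u : V} {a : Fin A}
    (h : IsPrivateNeighbor G′ D (.inl (u, a)) (.inl (u, a))) : copies u ⊆ D := by
  rintro _ ⟨b, rfl⟩
  rcases hD (.inl (u, b)) with hb | ⟨e, he, hadj⟩
  · exact hb
  · obtain rfl := h.unique e he (Or.inr (adj_inl_copy_right hadj))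
    simp at hadj

lemma eq_of_isPrivateNeighbor_of_not_copies_subset (hD : Dominates G′ D) {v : V}
    (hv : ¬ copies v ⊆ D) {d₁ d₂ : (V × Fin A) ⊕ Fin k} {b₁ b₂ : Fin A}
    (h₁ : IsPrivateNeighbor G′ D d₁ (.inl (v, b₁)))
    (h₂ : IsPrivateNeighbor G′ D d₂ (.inl (v, b₂))) : d₁ = d₂ := by
  rcases h₂.dominates with rfl | hadj
  · exact absurd (copies_subset_of_isPrivateNeighbor_self hD h₂) hv
  · exact (h₁.unique d₂ h₂.mem (Or.inr (adj_inl_copy_right hadj))).symm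

lemma eq_of_isPrivateNeighbor_of_copies_subset (hA : 2 ≤ A) {u : V} (hu : copies u ⊆ D)
    {a : Fin A} {x : (V × Fin A) ⊕ Fin k} (h : IsPrivateNeighbor G′ D (.inl (u, a)) x) :
    x = .inl (u, a) := by
  have := Fin.nontrivial_iff_two_le.2 hA
  obtain ⟨a', ha'⟩ := exists_ne a
  rcases h.dominates with hx | hadj
  · exact hx.symm
  · have := h.unique _ (hu ⟨a', rfl⟩) (Or.inr (adj_inl_copy_left hadj))
    simp [ha'] at this

lemma mem_copies_of_isPrivateNeighbor (hclique : ∀ u v : V, u ≠ v → c u = c v → G.Adj u v)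
    (hA : 2 ≤ A) {u : V} (hu : copies u ⊆ D) {d x : (V × Fin A) ⊕ Fin k}
    (hx : x ∈ insert (.inr (c u)) (G′.neighborSet (.inr (c u))))
    (h : IsPrivateNeighbor G′ D d x) : x ∈ copies u := by
  by_contra hxu
  have hdom : ∀ b, G′.Adj (.inl (u, b)) x := by
    intro b
    rcases x with ⟨v, b'⟩ | j
    · have hvu : v ≠ u := fun hvu => hxu ⟨b', hvu ▸ rfl⟩
      have hcv : c v = c u := by simpa [hvu] using hx
      exact adj_inl_inl.2 (hclique u v hvu.symm hcv.symm)
    · have hj : j = c u := by simpa using hx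
      exact adj_inl_inr.2 hj.symm
  have := Fin.nontrivial_iff_two_le.2 hA
  obtain ⟨a, a', ha⟩ := exists_pair_ne (Fin A)
  have := (h.unique _ (hu ⟨a, rfl⟩) (Or.inr (hdom a))).trans
    (h.unique _ (hu ⟨a', rfl⟩) (Or.inr (hdom a'))).symm
  simp [ha] at this

lemma ncard_privateOwners_le_of_copies_subset
    (hclique : ∀ u v : V, u ≠ v → c u = c v → G.Adj u v) (hA : 2 ≤ A) {u : V}
    (hu : copies u ⊆ D) :
    (privateOwners G′ D (insert (.inr (c u)) (G′.neighborSet (.inr (c u))))).ncard ≤ A := by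
  have hblock : privateOwners G′ D (insert (.inr (c u)) (G′.neighborSet (.inr (c u)))) =
      privateOwners G′ D (copies u) := by
    ext d
    constructor
    · rintro ⟨x, hx, h⟩
      exact ⟨x, mem_copies_of_isPrivateNeighbor hclique hA hu hx h, h⟩
    · rintro ⟨_, ⟨b, rfl⟩, h⟩
      exact ⟨_, Or.inr (adj_inr_inl (G := G).2 rfl), h⟩
  rw [hblock]
  calc _ ≤ (copies u).ncard := ncard_privateOwners_le (finite_range _)
    _ = Nat.card (Fin A) := ncard_range_of_injective fun _ _ h => by simpa using h
    _ = A := Nat.card_fin A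

lemma eq_or_eq_or_eq_of_isPrivateNeighbor (hclique : ∀ u v : V, u ≠ v → c u = c v → G.Adj u v)
    (hD : Dominates G′ D) {i : Fin k} {v₁ v₂ v₃ : V}
    (hc₁ : c v₁ = i) (hc₂ : c v₂ = i) (hc₃ : c v₃ = i) (h₁₂ : v₁ ≠ v₂) (h₁₃ : v₁ ≠ v₃)
    (h₂₃ : v₂ ≠ v₃) {d₁ d₂ d₃ : (V × Fin A) ⊕ Fin k} {b₁ b₂ b₃ : Fin A}
    (hp₁ : IsPrivateNeighbor G′ D d₁ (.inl (v₁, b₁)))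
    (hp₂ : IsPrivateNeighbor G′ D d₂ (.inl (v₂, b₂)))
    (hp₃ : IsPrivateNeighbor G′ D d₃ (.inl (v₃, b₃))) :
    d₁ = d₂ ∨ d₁ = d₃ ∨ d₂ = d₃ := by
  rcases hD (.inr i) with hz | ⟨⟨y, f⟩ | j, he, hadj⟩
  · exact Or.inl ((hp₁.unique _ hz (Or.inr (adj_inr_inl.2 hc₁))).symm.trans
      (hp₂.unique _ hz (Or.inr (adj_inr_inl.2 hc₂))))
  · have hcy : c y = i := adj_inl_inr.1 hadj
    have hown : ∀ {d v b}, IsPrivateNeighbor G′ D d (.inl (v, b)) → c v = i → y ≠ v →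
        .inl (y, f) = d := fun hp hcv hyv =>
      hp.unique _ he (Or.inr (adj_inl_inl.2 (hclique y _ hyv (hcy.trans hcv.symm))))
    by_cases hy₁ : y = v₁
    · subst hy₁
      exact Or.inr (Or.inr ((hown hp₂ hc₂ h₁₂).symm.trans (hown hp₃ hc₃ h₁₃)))
    by_cases hy₂ : y = v₂
    · subst hy₂
      exact Or.inr (Or.inl ((hown hp₁ hc₁ hy₁).symm.trans (hown hp₃ hc₃ h₂₃)))
    · exact Or.inl ((hown hp₁ hc₁ hy₁).symm.trans (hown hp₂ hc₂ hy₂))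
  · exact absurd hadj not_adj_inr_inr

lemma ncard_privateOwners_neighborSet_le_two
    (hclique : ∀ u v : V, u ≠ v → c u = c v → G.Adj u v) (hD : Dominates G′ D) {i : Fin k}
    (hi : ∀ u, c u = i → ¬ copies u ⊆ D) :
    (privateOwners G′ D (G′.neighborSet (.inr i))).ncard ≤ 2 := by
  by_contra! h
  obtain ⟨d₁, d₂, d₃, ⟨x₁, hx₁, hp₁⟩, ⟨x₂, hx₂, hp₂⟩, ⟨x₃, hx₃, hp₃⟩, h₁₂, h₁₃, h₂₃⟩ :=
    (two_lt_ncard_iff (finite_of_ncard_pos (by omega))).1 h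
  rcases x₁ with ⟨v₁, b₁⟩ | _ <;> rcases x₂ with ⟨v₂, b₂⟩ | _ <;>
    rcases x₃ with ⟨v₃, b₃⟩ | _ <;>
    simp only [SimpleGraph.mem_neighborSet, adj_inr_inl, not_adj_inr_inr] at hx₁ hx₂ hx₃
  have hne : ∀ {v v' : V} {d d' : (V × Fin A) ⊕ Fin k} {b b' : Fin A}, c v = i →
      IsPrivateNeighbor G′ D d (.inl (v, b)) → IsPrivateNeighbor G′ D d' (.inl (v', b')) →
      d ≠ d' → v ≠ v' := by
    rintro v v' d d' b b' hcv hp hp' hdd' rfl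
    exact hdd' (eq_of_isPrivateNeighbor_of_not_copies_subset hD (hi v hcv) hp hp')
  rcases eq_or_eq_or_eq_of_isPrivateNeighbor hclique hD hx₁ hx₂ hx₃ (hne hx₁ hp₁ hp₂ h₁₂)
    (hne hx₁ hp₁ hp₃ h₁₃) (hne hx₂ hp₂ hp₃ h₂₃) hp₁ hp₂ hp₃ with h | h | h <;> contradiction

lemma ncard_privateOwners_le_three
    (hclique : ∀ u v : V, u ≠ v → c u = c v → G.Adj u v) (hD : Dominates G′ D) {i : Fin k}
    (hi : ∀ u, c u = i → ¬ copies u ⊆ D) :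
    (privateOwners G′ D (insert (.inr i) (G′.neighborSet (.inr i)))).ncard ≤ 3 := by
  rw [insert_eq, privateOwners_union]
  calc _ ≤ _ + _ := ncard_union_le _ _
    _ ≤ 1 + 2 := add_le_add ((ncard_privateOwners_le (finite_singleton _)).trans_eq
        (ncard_singleton _)) (ncard_privateOwners_neighborSet_le_two hclique hD hi)

lemma exists_copies_subset_of_le_ncard (hclique : ∀ u v : V, u ≠ v → c u = c v → G.Adj u v)
    (hA : 4 ≤ A) (hD : MinimalDominatingSet G′ D) (hcard : A * k ≤ D.ncard) (i : Fin k) :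
    ∃ u, c u = i ∧ copies u ⊆ D := by
  by_contra! hi
  let owners (j : Fin k) := privateOwners G′ D (insert (.inr j) (G′.neighborSet (.inr j)))
  have hle (j : Fin k) : (owners j).ncard ≤ A := by
    by_cases hj : ∃ u, c u = j ∧ copies u ⊆ D
    · obtain ⟨u, rfl, hu⟩ := hj
      exact ncard_privateOwners_le_of_copies_subset hclique (by omega) hu
    · push Not at hj
      exact (ncard_privateOwners_le_three hclique hD.1 hj).trans (by omega)
  have hlt : (owners i).ncard < A :=
    (ncard_privateOwners_le_three hclique hD.1 hi).trans_lt (by omega)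
  have : D.ncard < A * k := calc
    D.ncard = (⋃ j, owners j).ncard := by
      rw [← privateOwners_iUnion, iUnion_insert_neighborSet_inr, hD.privateOwners_univ]
    _ ≤ ∑ j, (owners j).ncard := by simpa using Finset.set_ncard_biUnion_le Finset.univ owners
    _ < ∑ _j : Fin k, A := Finset.sum_lt_sum (fun j _ => hle j) ⟨i, Finset.mem_univ i, hlt⟩
    _ = A * k := by simp [mul_comm]
  omega

lemma not_adj_of_copies_subset (hA : 2 ≤ A) (hD : MinimalDominatingSet G′ D) {u v : V}
    (hu : copies u ⊆ D) (hv : copies v ⊆ D) : ¬ G.Adj u v := by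
  intro huv
  let a : Fin A := ⟨0, by omega⟩
  obtain ⟨x, hx⟩ := hD.exists_isPrivateNeighbor (hu ⟨a, rfl⟩)
  obtain rfl := eq_of_isPrivateNeighbor_of_copies_subset hA hu hx
  have := hx.unique _ (hv ⟨a, rfl⟩) (Or.inr (adj_inl_inl.2 huv.symm))
  simp only [Sum.inl.injEq, Prod.mk.injEq, and_true] at this
  exact G.ne_of_adj huv this.symm

lemma exists_indepSet_of_minimalDominatingSet
    (hclique : ∀ u v : V, u ≠ v → c u = c v → G.Adj u v) (hA : 4 ≤ A)
    (hD : MinimalDominatingSet G′ D) (hcard : A * k ≤ D.ncard) :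
    ∃ I : Set V, IndepSet G I ∧ k ≤ I.ncard := by
  choose f hfc hf using exists_copies_subset_of_le_ncard hclique hA hD hcard
  have hinj : Function.Injective f := fun i j h => by rw [← hfc i, ← hfc j, h]
  refine ⟨range f, ?_, ?_⟩
  · rintro _ ⟨i, rfl⟩ _ ⟨j, rfl⟩
    exact not_adj_of_copies_subset (by omega) hD (hf i) (hf j)
  · rw [ncard_range_of_injective hinj, Nat.card_fin]

end primeGraph

theorem stmt7_general {V : Type*} (G : SimpleGraph V) (k : ℕ) (c : V → Fin k)
    (hclique : ∀ u v : V, u ≠ v → c u = c v → G.Adj u v) :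
    (∃ I : Set V, IndepSet G I ∧ k ≤ I.ncard) ↔
      ∃ D : Set ((V × Fin 5) ⊕ Fin k),
        MinimalDominatingSet (primeGraph G c 5) D ∧ 5 * k ≤ D.ncard :=
  ⟨fun ⟨_, hI, hk⟩ =>
    primeGraph.exists_minimalDominatingSet_of_indepSet hclique (by norm_num) hI hk,
  fun ⟨_, hD, hcard⟩ =>
    primeGraph.exists_indepSet_of_minimalDominatingSet hclique (by norm_num) hD hcard⟩

theorem stmt7 {V : Type*} [Fintype V] (G : SimpleGraph V) (k : ℕ) (c : V → Fin k)
    (hclique : ∀ u v : V, u ≠ v → c u = c v → G.Adj u v)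
    (hsurj : Function.Surjective c) :
    (∃ I : Set V, IndepSet G I ∧ k ≤ I.ncard) ↔
      ∃ D : Set ((V × Fin 5) ⊕ Fin k),
        MinimalDominatingSet (primeGraph G c 5) D ∧ 5 * k ≤ D.ncard :=
  stmt7_general G k c hclique
end

section
/- Let φ be a q-CSP-6 instance with n variables and m constraints, and let G(φ) be the associated constructed graph with budget k = Fm(2n+A) + 2n, where A = 4q+2 and F = (2n+1)(4n+1). If φ is satisfiable, then G(φ) has a minimal dominating set of size at least k. -/
/-- A `q`-CSP-6 instance with `n` variables and `m` constraints: each constraint `j`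
involves the `q` pairwise distinct variables `vars j 0, …, vars j (q-1)` and comes with
a nonempty list of `C j` satisfying assignments `sat j l : Fin q → Fin 6`. -/
structure QCSP (q n m : ℕ) where
  vars : Fin m → Fin q → Fin n
  vars_inj : ∀ j : Fin m, Function.Injective (vars j)
  C : Fin m → ℕ
  C_pos : ∀ j : Fin m, 0 < C j
  sat : (j : Fin m) → Fin (C j) → Fin q → Fin 6

/-- `φ` is satisfiable: some total assignment restricts, on each constraint,
to one of the constraint's satisfying assignments. -/
def QCSP.Satisfiable {q n m : ℕ} (φ : QCSP q n m) : Prop :=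
  ∃ ρ : Fin n → Fin 6, ∀ j : Fin m, ∃ l : Fin (φ.C j),
    ∀ p : Fin q, ρ (φ.vars j p) = φ.sat j l p

/-- `A = 4q + 2`. -/
def Anum (q : ℕ) : ℕ := 4 * q + 2

/-- `F = (2n+1)(4n+1)`. -/
def Fnum (n : ℕ) : ℕ := (2 * n + 1) * (4 * n + 1)

/-- For a section `j ∈ {0, …, Fm − 1}`, the index `j' = j mod m` of the associated
constraint. -/
def cIdx {n m : ℕ} (j : Fin (Fnum n * m)) : Fin m :=
  ⟨j.val % m, Nat.mod_lt _ (by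
    rcases Nat.eq_zero_or_pos m with h | h
    · exact absurd j.isLt (by simp [h])
    · exact h)⟩

/-- Vertices of the constructed graph `G(φ)`:
* `path i t` is the path vertex `u_{i, t−3}` (so `t : Fin (4Fm+6)` ranges over the paper
  indices `−3, …, 4Fm+2`);
* `kvert j l a` is the `a`-th vertex of the clique part `K_j^l`;
* `lvert j l a` is the `a`-th vertex of the clique part `L_j^l`;
* `wvert j` is the vertex `w_j`. -/
inductive CVert (q n m : ℕ) (C : Fin m → ℕ) : Type where
  | path (i : Fin n) (t : Fin (4 * (Fnum n * m) + 6))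
  | kvert (j : Fin (Fnum n * m)) (l : Fin (C (cIdx j))) (a : Fin (Anum q))
  | lvert (j : Fin (Fnum n * m)) (l : Fin (C (cIdx j))) (a : Fin (Anum q))
  | wvert (j : Fin (Fnum n * m))

/-- First path-offset associated to a value `v ∈ {0,…,5}`:
`2, 3, 0, 1, 1, 0` respectively. -/
def off1 (v : Fin 6) : ℕ :=
  match v.val with
  | 0 => 2 | 1 => 3 | 2 => 0 | 3 => 1 | 4 => 1 | _ => 0

/-- Second path-offset associated to a value `v ∈ {0,…,5}`:
`3, 0, 1, 2, 3, 2` respectively. -/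
def off2 (v : Fin 6) : ℕ :=
  match v.val with
  | 0 => 3 | 1 => 0 | 2 => 1 | 3 => 2 | 4 => 3 | _ => 2

/-- The base edge relation of `G(φ)` (before symmetrization):
consecutive path vertices; `K_j` a clique; `L_j` a clique; each vertex of `K_j^l`
joined to the two path vertices of `Q_{i,j}` determined by `σ_l(x_i)` for every
variable `x_i` involved in the constraint `c_{j mod m}`; a perfect matching between
`K_j^l` and `L_j^l` and all edges between `K_j^l` and `L_j^{l'}` for `l ≠ l'`;
`w_j` joined to all of `L_j`. -/
def cspRel (q n m : ℕ) (φ : QCSP q n m) :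
    CVert q n m φ.C → CVert q n m φ.C → Prop
  | .path i t, .path i' t' => i = i' ∧ t'.val = t.val + 1
  | .kvert j _ _, .kvert j' _ _ => j = j'
  | .lvert j _ _, .lvert j' _ _ => j = j'
  | .kvert j l _, .path i t =>
      ∃ p : Fin q, φ.vars (cIdx j) p = i ∧
        (t.val = 4 * j.val + off1 (φ.sat (cIdx j) l p) + 3 ∨
         t.val = 4 * j.val + off2 (φ.sat (cIdx j) l p) + 3)
  | .kvert j l a, .lvert j' l' a' => j = j' ∧ (l.val = l'.val → a = a')
  | .wvert j, .lvert j' _ _ => j = j'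
  | _, _ => False

/-- The constructed graph `G(φ)`. -/
def cspGraph (q n m : ℕ) (φ : QCSP q n m) : SimpleGraph (CVert q n m φ.C) :=
  SimpleGraph.fromRel (cspRel q n m φ)

/-- The budget `k = Fm(2n + A) + 2n`. -/
def budget (q n m : ℕ) : ℕ := Fnum n * m * (2 * n + Anum q) + 2 * n


set_option maxHeartbeats 4000000

namespace Stmt9Aux


def c1 (v : Fin 6) : ℕ :=
  if v.val = 0 then 0 else if v.val = 1 then 1 else if v.val = 2 then 2
  else if v.val = 3 then 0 else if v.val = 4 then 0 else 1

def c2 (v : Fin 6) : ℕ :=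
  if v.val = 0 then 1 else if v.val = 1 then 2 else if v.val = 2 then 3
  else if v.val = 3 then 3 else if v.val = 4 then 2 else 3

def lbv (v : Fin 6) (t : ℕ) : Prop :=
  if v.val = 1 ∨ v.val = 5 then t = 1
  else if v.val = 2 then t = 0 ∨ t = 2
  else t = 0

def rbv (v : Fin 6) (N t : ℕ) : Prop :=
  if v.val = 0 then t = 4*N+3 ∨ t = 4*N+5
  else if v.val = 1 ∨ v.val = 4 then t = 4*N+4
  else t = 4*N+5

def pmem (v : Fin 6) (N t : ℕ) : Prop :=
  (N = 0 ∧ (t = 1 ∨ t = 4)) ∨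
  (N ≠ 0 ∧ ((3 ≤ t ∧ t < 4*N+3 ∧ ((t-3)%4 = c1 v ∨ (t-3)%4 = c2 v)) ∨ lbv v t ∨ rbv v N t))

def privT (v : Fin 6) (N t : ℕ) : ℕ :=
  if N = 0 then (if t = 1 then 0 else 5)
  else if v.val = 0 then
    (if t = 0 then 0 else if t = 4*N+3 then 4*N+2 else if t = 4*N+5 then 4*N+5
     else if (t-3)%4 = 0 then t-1 else t+1)
  else if v.val = 1 then
    (if t = 1 then 0 else if t = 4*N+4 then 4*N+5
     else if (t-3)%4 = 1 then t-1 else t+1)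
  else if v.val = 2 then
    (if t = 0 then 0 else if t = 2 then 3 else if t = 4*N+5 then 4*N+5
     else if (t-3)%4 = 2 then t-1 else t+1)
  else if v.val = 3 then
    (if t = 0 then 0 else if t = 4*N+5 then 4*N+5
     else if (t-3)%4 = 0 then t+1 else t-1)
  else if v.val = 4 then (if t = 4*N+4 then 4*N+5 else t)
  else (if t = 1 then 0 else t)

lemma c12 (v : Fin 6) : c1 v < c2 v ∧ c2 v ≤ 3 := by
  obtain ⟨vv, hvv⟩ := v
  interval_cases vv <;> simp [c1, c2]

lemma pmem_dom (v : Fin 6) (N t : ℕ) (ht : t < 4*N+6) :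
    pmem v N t ∨ (1 ≤ t ∧ pmem v N (t-1)) ∨ (t+1 < 4*N+6 ∧ pmem v N (t+1)) := by
  obtain ⟨vv, hvv⟩ := v
  interval_cases vv <;>
  · simp only [pmem, lbv, rbv, c1, c2]
    norm_num
    omega

lemma priv_spec (v : Fin 6) (N t : ℕ) (ht : t < 4*N+6) (hm : pmem v N t) :
    privT v N t < 4*N+6 ∧ (privT v N t = t ∨ privT v N t + 1 = t ∨ t + 1 = privT v N t) ∧
    ∀ t', t' < 4*N+6 → pmem v N t' →
      (t' = privT v N t ∨ t' + 1 = privT v N t ∨ privT v N t + 1 = t') → t' = t := by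
  obtain ⟨vv, hvv⟩ := v
  interval_cases vv <;>
  · simp only [pmem, lbv, rbv, c1, c2, privT] at hm ⊢
    norm_num at hm ⊢
    split_ifs <;>
      (refine ⟨by omega, by omega, ?_⟩; intro t' h1 h2 h3;
       first
       | omega
       | exact h3.elim
       | (simp only [false_or, or_false, or_self] at h3; omega))

lemma pmem_off (v : Fin 6) (N t j : ℕ) (hj : j < N)
    (h : t = 4*j + off1 v + 3 ∨ t = 4*j + off2 v + 3) : ¬ pmem v N t := by
  obtain ⟨vv, hvv⟩ := v
  interval_cases vv <;>
  · simp only [pmem, lbv, rbv, c1, c2, off1, off2] at h ⊢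
    norm_num at h ⊢
    omega

lemma pmem_c1 (v : Fin 6) (N j : ℕ) (hj : j < N) : pmem v N (4*j+3+c1 v) := by
  obtain ⟨vv, hvv⟩ := v
  interval_cases vv <;>
  · simp only [pmem, lbv, rbv, c1, c2]
    norm_num
    omega

lemma pmem_c2 (v : Fin 6) (N j : ℕ) (hj : j < N) : pmem v N (4*j+3+c2 v) := by
  obtain ⟨vv, hvv⟩ := v
  interval_cases vv <;>
  · simp only [pmem, lbv, rbv, c1, c2]
    norm_num
    omega

def bt (v : Fin 6) (N : ℕ) (b : Fin 2) : ℕ :=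
  if N = 0 then (if b.val = 0 then 1 else 4)
  else if b.val = 0 then (if v.val = 1 ∨ v.val = 5 then 1 else 0)
  else if v.val = 0 then 4*N+3
  else if v.val = 1 ∨ v.val = 4 then 4*N+4
  else if v.val = 2 then 2
  else 4*N+5

lemma bt_lt (v : Fin 6) (N : ℕ) (b : Fin 2) : bt v N b < 4*N+6 := by
  obtain ⟨vv, hvv⟩ := v
  obtain ⟨bb, hbb⟩ := b
  interval_cases vv <;> interval_cases bb <;>
  · simp only [bt]
    norm_num <;> (try split_ifs) <;> omega

lemma bt_mem (v : Fin 6) (N : ℕ) (b : Fin 2) : pmem v N (bt v N b) := by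
  obtain ⟨vv, hvv⟩ := v
  obtain ⟨bb, hbb⟩ := b
  interval_cases vv <;> interval_cases bb <;>
  · simp only [bt, pmem, lbv, rbv, c1, c2]
    norm_num <;> (try split_ifs) <;> omega

lemma bt_not_mid (v : Fin 6) (N : ℕ) (b : Fin 2) (hN : N ≠ 0) :
    bt v N b ≤ 2 ∨ 4*N+3 ≤ bt v N b := by
  obtain ⟨vv, hvv⟩ := v
  obtain ⟨bb, hbb⟩ := b
  interval_cases vv <;> interval_cases bb <;>
  · simp only [bt, hN]
    norm_num <;> (try split_ifs) <;> omega

lemma bt_inj (v : Fin 6) (N : ℕ) (b b' : Fin 2) (h : bt v N b = bt v N b') : b = b' := by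
  obtain ⟨vv, hvv⟩ := v
  obtain ⟨bb, hbb⟩ := b
  obtain ⟨bb', hbb'⟩ := b'
  interval_cases bb <;> interval_cases bb' <;> (try rfl) <;>
  · exfalso
    interval_cases vv <;>
    · simp only [bt] at h
      norm_num at h <;> (try split_ifs at h) <;> omega


variable {q n m : ℕ} {φ : QCSP q n m}

/-- The chosen dominating set. -/
def Dset (φ : QCSP q n m) (ρ : Fin n → Fin 6) (sel : ∀ j : Fin m, Fin (φ.C j)) :
    Set (CVert q n m φ.C) := fun x =>
  match x with
  | .path i t => pmem (ρ i) (Fnum n * m) t.val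
  | .kvert _ _ _ => False
  | .lvert j l _ => l = sel (cIdx j)
  | .wvert _ => False

lemma adj_iff {x y : CVert q n m φ.C} :
    (cspGraph q n m φ).Adj x y ↔ x ≠ y ∧ (cspRel q n m φ x y ∨ cspRel q n m φ y x) :=
  SimpleGraph.fromRel_adj _ _ _

instance : Finite (CVert q n m φ.C) := by
  let g : CVert q n m φ.C →
      (Fin n × Fin (4*(Fnum n*m)+6)) ⊕
      ((Σ j : Fin (Fnum n*m), Fin (φ.C (cIdx j)) × Fin (Anum q))) ⊕
      ((Σ j : Fin (Fnum n*m), Fin (φ.C (cIdx j)) × Fin (Anum q))) ⊕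
      (Fin (Fnum n*m)) := fun x =>
    match x with
    | .path i t => .inl (i, t)
    | .kvert j l a => .inr (.inl ⟨j, (l, a)⟩)
    | .lvert j l a => .inr (.inr (.inl ⟨j, (l, a)⟩))
    | .wvert j => .inr (.inr (.inr j))
  have hg : Function.Injective g := by
    intro x y h
    cases x <;> cases y <;> simp_all [g] <;>
      (obtain ⟨h1, h2⟩ := h; subst h1; have h3 := eq_of_heq h2;
       injection h3 with h4 h5; exact ⟨heq_of_eq h4, h5⟩)
  exact Finite.of_injective g hg

lemma adj_path_path {i i' : Fin n} {t t' : Fin (4 * (Fnum n * m) + 6)}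
    (h : (cspGraph q n m φ).Adj (.path i t) (.path i' t')) :
    i = i' ∧ (t'.val = t.val + 1 ∨ t.val = t'.val + 1) := by
  rw [adj_iff] at h
  rcases h.2 with h' | h'
  · exact ⟨h'.1, Or.inl h'.2⟩
  · exact ⟨h'.1.symm, Or.inr h'.2⟩

lemma adj_lvert_path {j l a} {i : Fin n} {t : Fin (4 * (Fnum n * m) + 6)}
    (h : (cspGraph q n m φ).Adj (.lvert j l a) (.path i t)) : False := by
  rw [adj_iff] at h
  rcases h.2 with h' | h' <;> exact h'

lemma adj_path_adj {i i' : Fin n} {t t' : Fin (4 * (Fnum n * m) + 6)}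
    (hi : i = i') (h : t'.val = t.val + 1 ∨ t.val = t'.val + 1) :
    (cspGraph q n m φ).Adj (.path i t) (.path i' t') := by
  subst hi
  rw [adj_iff]
  constructor
  · intro he
    injection he with h1 h2
    rw [Fin.ext_iff] at h2
    omega
  · rcases h with h | h
    · exact Or.inl ⟨rfl, h⟩
    · exact Or.inr ⟨rfl, h⟩

lemma dom_lemma (ρ : Fin n → Fin 6) (sel : ∀ j : Fin m, Fin (φ.C j)) :
    Dominates (cspGraph q n m φ) (Dset φ ρ sel) := by
  intro x
  cases x with
  | path i t =>
    rcases pmem_dom (ρ i) (Fnum n * m) t.val t.isLt with h | ⟨h1, h⟩ | ⟨h1, h⟩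
    · exact Or.inl h
    · refine Or.inr ⟨.path i ⟨t.val - 1, by omega⟩, h, ?_⟩
      exact adj_path_adj rfl (by simp; omega)
    · refine Or.inr ⟨.path i ⟨t.val + 1, by omega⟩, h, ?_⟩
      exact adj_path_adj rfl (by simp)
  | kvert j l a =>
    refine Or.inr ⟨.lvert j (sel (cIdx j)) a, rfl, ?_⟩
    rw [adj_iff]
    refine ⟨by simp, Or.inr ⟨rfl, fun _ => rfl⟩⟩
  | lvert j l a =>
    by_cases hl : l = sel (cIdx j)
    · exact Or.inl hl
    · refine Or.inr ⟨.lvert j (sel (cIdx j)) a, rfl, ?_⟩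
      rw [adj_iff]
      refine ⟨?_, Or.inl rfl⟩
      intro he
      injection he with h1 h2 h3
      exact hl h2.symm
  | wvert j =>
    refine Or.inr ⟨.lvert j (sel (cIdx j)) ⟨0, by unfold Anum; omega⟩, rfl, ?_⟩
    rw [adj_iff]
    exact ⟨by simp, Or.inr rfl⟩

lemma priv_lemma (ρ : Fin n → Fin 6) (sel : ∀ j : Fin m, Fin (φ.C j))
    (hsel : ∀ (j : Fin m) (p : Fin q), ρ (φ.vars j p) = φ.sat j (sel j) p) :
    ∀ x ∈ Dset φ ρ sel, ∃ p, (x = p ∨ (cspGraph q n m φ).Adj x p) ∧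
      ∀ u ∈ Dset φ ρ sel, (u = p ∨ (cspGraph q n m φ).Adj u p) → u = x := by
  intro x hx
  cases x with
  | path i t =>
    have hm : pmem (ρ i) (Fnum n * m) t.val := hx
    obtain ⟨hs1, hs2, hs3⟩ := priv_spec (ρ i) _ t.val t.isLt hm
    refine ⟨.path i ⟨privT (ρ i) (Fnum n * m) t.val, hs1⟩, ?_, ?_⟩
    · rcases hs2 with h | h | h
      · exact Or.inl (by rw [CVert.path.injEq]; exact ⟨rfl, Fin.ext h.symm⟩)
      · exact Or.inr (adj_path_adj rfl (by simp; omega))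
      · exact Or.inr (adj_path_adj rfl (by simp; omega))
    · intro u hu hadj
      cases u with
      | path i' t' =>
        rcases hadj with he | hA
        · injection he with h1 h2
          subst h1
          have := hs3 t'.val t'.isLt hu (Or.inl (by rw [h2]))
          rw [CVert.path.injEq]
          exact ⟨rfl, Fin.ext this⟩
        · obtain ⟨hi, hv⟩ := adj_path_path hA
          subst hi
          have := hs3 t'.val t'.isLt hu (by simp at hv; omega)
          rw [CVert.path.injEq]
          exact ⟨rfl, Fin.ext this⟩
      | kvert j' l' a' => exact hu.elim
      | lvert j' l' a' =>
        rcases hadj with he | hA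
        · exact (nomatch he)
        · exact (adj_lvert_path hA).elim
      | wvert j' => exact hu.elim
  | kvert j l a => exact hx.elim
  | lvert j l a =>
    have hl : l = sel (cIdx j) := hx
    refine ⟨.kvert j l a, ?_, ?_⟩
    · refine Or.inr ?_
      rw [adj_iff]
      exact ⟨by simp, Or.inr ⟨rfl, fun _ => rfl⟩⟩
    · intro u hu hadj
      cases u with
      | path i' t' =>
        exfalso
        rcases hadj with he | hA
        · exact nomatch he
        · rw [adj_iff] at hA
          rcases hA.2 with h' | h'
          · exact h'
          · obtain ⟨pp, hvars, hoff⟩ := h'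
            have hval : φ.sat (cIdx j) l pp = ρ i' := by
              rw [hl, ← hsel (cIdx j) pp, hvars]
            rw [hval] at hoff
            exact pmem_off (ρ i') (Fnum n * m) t'.val j.val j.isLt
              (by rcases hoff with h | h
                  · exact Or.inl (by omega)
                  · exact Or.inr (by omega)) hu
      | kvert j' l' a' => exact hu.elim
      | lvert j' l' a' =>
        have hl' : l' = sel (cIdx j') := hu
        rcases hadj with he | hA
        · exact (nomatch he)
        · rw [adj_iff] at hA
          rcases hA.2 with h' | h'
          · exact h'.elim
          · obtain ⟨hj, himp⟩ := h'
            subst hj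
            have hll : l = l' := by rw [hl, hl']
            have haa : a = a' := himp (by rw [hll])
            rw [CVert.lvert.injEq]
            exact ⟨rfl, heq_of_eq hll.symm, haa.symm⟩
      | wvert j' => exact hu.elim
  | wvert j => exact hx.elim

def cf (v : Fin 6) (b : Fin 2) : ℕ := if b.val = 0 then c1 v else c2 v

lemma cf_le (v : Fin 6) (b : Fin 2) : cf v b ≤ 3 := by
  have := c12 v; unfold cf; split_ifs <;> omega

lemma cf_inj (v : Fin 6) (b b' : Fin 2) (h : cf v b = cf v b') : b = b' := by
  have := c12 v
  have hb := b.isLt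
  have hb' := b'.isLt
  unfold cf at h
  split_ifs at h <;> (try omega) <;> (apply Fin.ext; omega)

lemma cf_mem (v : Fin 6) (N j : ℕ) (hj : j < N) (b : Fin 2) : pmem v N (4*j+3+cf v b) := by
  unfold cf
  split_ifs
  · exact pmem_c1 v N j hj
  · exact pmem_c2 v N j hj

lemma card_lemma (ρ : Fin n → Fin 6) (sel : ∀ j : Fin m, Fin (φ.C j)) :
    budget q n m ≤ (Dset φ ρ sel).ncard := by
  classical
  let f : (Fin (Fnum n * m) × Fin n × Fin 2) ⊕ (Fin (Fnum n * m) × Fin (Anum q)) ⊕ (Fin n × Fin 2) →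
      CVert q n m φ.C := fun z =>
    match z with
    | .inl (j, i, b) => .path i ⟨4*j.val+3+cf (ρ i) b,
        by have := cf_le (ρ i) b; have := j.isLt; omega⟩
    | .inr (.inl (j, a)) => .lvert j (sel (cIdx j)) a
    | .inr (.inr (i, b)) => .path i ⟨bt (ρ i) (Fnum n * m) b, bt_lt _ _ _⟩
  have hrange : ∀ z, f z ∈ Dset φ ρ sel := by
    intro z
    rcases z with ⟨j, i, b⟩ | ⟨j, a⟩ | ⟨i, b⟩
    · exact cf_mem (ρ i) (Fnum n * m) j.val j.isLt b
    · exact rfl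
    · exact bt_mem (ρ i) (Fnum n * m) b
  have hinj : Function.Injective f := by
    intro z z' h
    rcases z with ⟨j, i, b⟩ | ⟨j, a⟩ | ⟨i, b⟩ <;>
      rcases z' with ⟨j', i', b'⟩ | ⟨j', a'⟩ | ⟨i', b'⟩ <;>
      simp only [f] at h
    · injection h with h1 h2
      subst h1
      rw [Fin.ext_iff] at h2
      simp only at h2
      have hc := cf_le (ρ i) b
      have hc' := cf_le (ρ i) b'
      have hj : j.val = j'.val := by omega
      have hcf : cf (ρ i) b = cf (ρ i) b' := by omega
      have hb : b = b' := cf_inj _ _ _ hcf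
      have hjj : j = j' := Fin.ext hj
      subst hb
      subst hjj
      rfl
    · simp at h
    · injection h with h1 h2
      subst h1
      rw [Fin.ext_iff] at h2
      simp only at h2
      exfalso
      have hc := cf_le (ρ i) b
      have hN : Fnum n * m ≠ 0 := Nat.pos_iff_ne_zero.mp j.pos
      have := bt_not_mid (ρ i) (Fnum n * m) b' hN
      have := j.isLt
      omega
    · simp at h
    · injection h with h1 h2 h3
      subst h1
      subst h3
      rfl
    · simp at h
    · injection h with h1 h2
      subst h1
      rw [Fin.ext_iff] at h2
      simp only at h2
      exfalso
      have hc := cf_le (ρ i) b'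
      have hN : Fnum n * m ≠ 0 := Nat.pos_iff_ne_zero.mp j'.pos
      have := bt_not_mid (ρ i) (Fnum n * m) b hN
      have := j'.isLt
      omega
    · simp at h
    · injection h with h1 h2
      subst h1
      rw [Fin.ext_iff] at h2
      simp only at h2
      have hb : b = b' := bt_inj (ρ i) (Fnum n * m) b b' h2
      subst hb
      rfl
  have key : budget q n m = Nat.card ((Fin (Fnum n * m) × Fin n × Fin 2) ⊕
      (Fin (Fnum n * m) × Fin (Anum q)) ⊕ (Fin n × Fin 2)) := by
    simp [Nat.card_eq_fintype_card, budget]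
    ring
  rw [key]
  calc Nat.card ((Fin (Fnum n * m) × Fin n × Fin 2) ⊕
      (Fin (Fnum n * m) × Fin (Anum q)) ⊕ (Fin n × Fin 2))
      = (Set.range f).ncard := by
        rw [← Nat.card_coe_set_eq, Nat.card_range_of_injective hinj]
    _ ≤ (Dset φ ρ sel).ncard :=
        Set.ncard_le_ncard (Set.range_subset_iff.mpr hrange) (Set.toFinite _)


end Stmt9Aux

theorem stmt9 (q n m : ℕ) (φ : QCSP q n m) (hsat : φ.Satisfiable) :
    ∃ D : Set (CVert q n m φ.C), MinimalDominatingSet (cspGraph q n m φ) D ∧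
      budget q n m ≤ D.ncard := by
  classical
  obtain ⟨ρ, hρ⟩ := hsat
  choose sel hsel using hρ
  refine ⟨Stmt9Aux.Dset φ ρ sel, ⟨Stmt9Aux.dom_lemma ρ sel, ?_⟩, Stmt9Aux.card_lemma ρ sel⟩
  intro D' hss hdom
  obtain ⟨x, hxD, hxD'⟩ := Set.exists_of_ssubset hss
  obtain ⟨p, hp1, hp2⟩ := Stmt9Aux.priv_lemma ρ sel hsel x hxD
  rcases hdom p with hpD' | ⟨u, huD', hup⟩
  · have hpx : p = x := hp2 p (hss.1 hpD') (Or.inl rfl)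
    exact hxD' (hpx ▸ hpD')
  · have hux : u = x := hp2 u (hss.1 huD') (Or.inr hup)
    exact hxD' (hux ▸ huD')
end

section
/- Let φ be a q-CSP-6 instance with n variables and m constraints, let G(φ) be the associated constructed graph with A = 4q+2 and F = (2n+1)(4n+1), and let D be a minimal dominating set of G(φ) of maximum cardinality. Then for every j ∈ {0,…,Fm−1}, |D ∩ V_j| ≤ 2n + A, where V_j is the union of the gadget H_j and the sets Q_{i,j} = {u_{i,4j}, u_{i,4j+1}, u_{i,4j+2}, u_{i,4j+3}} for i ∈ {1,…,n}. -/
/-- The section `V_j`: the gadget `H_j` together with the path vertices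
`Q_{i,j} = {u_{i,4j}, u_{i,4j+1}, u_{i,4j+2}, u_{i,4j+3}}` for `i ∈ {1,…,n}`
(recall the index shift `u_{i,s} = path i (s + 3)`). -/
def Vsec (q n m : ℕ) (C : Fin m → ℕ) (j : Fin (Fnum n * m)) : Set (CVert q n m C) :=
  {x | match x with
    | .path _ t => ∃ s : ℕ, s < 4 ∧ t.val = 4 * j.val + s + 3
    | .kvert j' _ _ => j' = j
    | .lvert j' _ _ => j' = j
    | .wvert j' => j' = j}

section Stmt11Proof

open Set

variable {q n m : ℕ}

/-- Path vertex of row `i`, offset `s` inside section `j`. -/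
def PVx (C : Fin m → ℕ) (j : Fin (Fnum n * m)) (i : Fin n) (s : Fin 4) : CVert q n m C :=
  .path i ⟨4 * j.val + s.val + 3, by have := j.isLt; have := s.isLt; omega⟩

lemma PVx_inj {C : Fin m → ℕ} {j : Fin (Fnum n * m)} {i i' : Fin n} {s s' : Fin 4}
    (h : PVx C j i s = PVx (q := q) C j i' s') : i = i' ∧ s = s' := by
  rcases s with ⟨sv, hs⟩; rcases s' with ⟨sv', hs'⟩
  injection h with h1 h2
  refine ⟨h1, ?_⟩
  have : 4 * j.val + sv + 3 = 4 * j.val + sv' + 3 := congrArg Fin.val h2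
  simp; omega

variable {φ : QCSP q n m}

/-- Row `i`'s four section-`j` path vertices. -/
def Qrow (C : Fin m → ℕ) (j : Fin (Fnum n * m)) (i : Fin n) : Set (CVert q n m C) :=
  Set.range (PVx C j i)

def Kset (C : Fin m → ℕ) (j : Fin (Fnum n * m)) : Set (CVert q n m C) :=
  {x | ∃ l a, x = .kvert j l a}

def Lset (C : Fin m → ℕ) (j : Fin (Fnum n * m)) : Set (CVert q n m C) :=
  {x | ∃ l a, x = .lvert j l a}

def LpartNM (C : Fin m → ℕ) (j : Fin (Fnum n * m)) (l : Fin (C (cIdx j))) (a : Fin (Anum q)) :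
    Set (CVert q n m C) :=
  (fun a' => (.lvert j l a' : CVert q n m C)) '' ({a}ᶜ)

def KpartNM (C : Fin m → ℕ) (j : Fin (Fnum n * m)) (l : Fin (C (cIdx j))) (a : Fin (Anum q)) :
    Set (CVert q n m C) :=
  (fun a' => (.kvert j l a' : CVert q n m C)) '' ({a}ᶜ)

/-- The path vertices of section `j` belonging to rows of variables of the constraint. -/
def Pths (φ : QCSP q n m) (j : Fin (Fnum n * m)) : Set (CVert q n m φ.C) :=
  (fun ps : Fin q × Fin 4 => PVx φ.C j (φ.vars (cIdx j) ps.1) ps.2) '' Set.univ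

/-- `x` is dominated within `D` only by `v`. -/
def PrivAt (φ : QCSP q n m) (D : Set (CVert q n m φ.C)) (x v : CVert q n m φ.C) : Prop :=
  ∀ u ∈ D, (u = x ∨ (cspGraph q n m φ).Adj u x) → u = v

lemma off_lt (v : Fin 6) : off1 v < 4 ∧ off2 v < 4 ∧ off1 v ≠ off2 v := by
  rcases v with ⟨vv, hv⟩
  unfold off1 off2
  interval_cases vv <;> simp

/-! ### Adjacency lemmas -/

lemma adj_iff (u v : CVert q n m φ.C) :
    (cspGraph q n m φ).Adj u v ↔ u ≠ v ∧ (cspRel q n m φ u v ∨ cspRel q n m φ v u) :=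
  SimpleGraph.fromRel_adj _ _ _

lemma adj_pp {i i' : Fin n} {t t'} :
    (cspGraph q n m φ).Adj (.path i t) (.path i' t') ↔
      i = i' ∧ (t'.val = t.val + 1 ∨ t.val = t'.val + 1) := by
  rw [adj_iff]
  constructor
  · rintro ⟨hne, h | h⟩
    · exact ⟨h.1, Or.inl h.2⟩
    · exact ⟨h.1.symm, Or.inr h.2⟩
  · rintro ⟨rfl, h | h⟩
    · exact ⟨by simp [Fin.ext_iff]; omega, Or.inl ⟨rfl, h⟩⟩
    · exact ⟨by simp [Fin.ext_iff]; omega, Or.inr ⟨rfl, h⟩⟩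

lemma adj_kp {j} {l : Fin (φ.C (cIdx j))} {a : Fin (Anum q)} {i : Fin n} {t} :
    (cspGraph q n m φ).Adj (.kvert j l a) (.path i t) ↔
      ∃ p : Fin q, φ.vars (cIdx j) p = i ∧
        (t.val = 4 * j.val + off1 (φ.sat (cIdx j) l p) + 3 ∨
         t.val = 4 * j.val + off2 (φ.sat (cIdx j) l p) + 3) := by
  rw [adj_iff]
  constructor
  · rintro ⟨hne, h | h⟩
    · exact h
    · exact h.elim
  · intro h
    exact ⟨by simp, Or.inl h⟩

lemma adj_kk {j} {l l' : Fin (φ.C (cIdx j))} {a a' : Fin (Anum q)} :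
    (cspGraph q n m φ).Adj (.kvert j l a) (.kvert j l' a') ↔ ¬(l = l' ∧ a = a') := by
  rw [adj_iff]
  constructor
  · rintro ⟨hne, -⟩ ⟨rfl, rfl⟩
    exact hne rfl
  · intro h
    refine ⟨fun he => h ?_, Or.inl rfl⟩
    · simpa using he
lemma adj_ll {j} {l l' : Fin (φ.C (cIdx j))} {a a' : Fin (Anum q)} :
    (cspGraph q n m φ).Adj (.lvert j l a) (.lvert j l' a') ↔ ¬(l = l' ∧ a = a') := by
  rw [adj_iff]
  constructor
  · rintro ⟨hne, -⟩ ⟨rfl, rfl⟩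
    exact hne rfl
  · intro h
    refine ⟨fun he => h ?_, Or.inl rfl⟩
    · simpa using he

lemma adj_kl {j} {l l' : Fin (φ.C (cIdx j))} {a a' : Fin (Anum q)} :
    (cspGraph q n m φ).Adj (.kvert j l a) (.lvert j l' a') ↔ (l.val = l'.val → a = a') := by
  rw [adj_iff]
  constructor
  · rintro ⟨hne, h | h⟩
    · exact h.2
    · exact h.elim
  · intro h
    exact ⟨by simp, Or.inl ⟨rfl, h⟩⟩

lemma adj_wl {j j'} {l : Fin (φ.C (cIdx j'))} {a : Fin (Anum q)} :
    (cspGraph q n m φ).Adj (.wvert j) (.lvert j' l a) ↔ j = j' := by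
  rw [adj_iff]
  constructor
  · rintro ⟨hne, h | h⟩
    · exact h
    · exact h.elim
  · intro h
    exact ⟨by simp, Or.inl h⟩

lemma adj_kk_cross {j j'} {l l'} {a a' : Fin (Anum q)}
    (h : (cspGraph q n m φ).Adj (.kvert j l a) (.kvert j' l' a')) : j = j' := by
  rw [adj_iff] at h
  rcases h with ⟨-, h | h⟩
  · exact h
  · exact h.symm

lemma adj_ll_cross {j j'} {l l'} {a a' : Fin (Anum q)}
    (h : (cspGraph q n m φ).Adj (.lvert j l a) (.lvert j' l' a')) : j = j' := by
  rw [adj_iff] at h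
  rcases h with ⟨-, h | h⟩
  · exact h
  · exact h.symm

lemma adj_kl_cross {j j'} {l l'} {a a' : Fin (Anum q)}
    (h : (cspGraph q n m φ).Adj (.kvert j l a) (.lvert j' l' a')) : j = j' := by
  rw [adj_iff] at h
  rcases h with ⟨-, h | h⟩
  · exact h.1
  · exact h.elim

lemma not_adj_lp {j} {l} {a : Fin (Anum q)} {i : Fin n} {t} :
    ¬ (cspGraph q n m φ).Adj (.lvert j l a) (.path i t) := by
  rw [adj_iff]
  rintro ⟨-, h | h⟩ <;> exact h.elim

lemma not_adj_wp {j} {i : Fin n} {t} :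
    ¬ (cspGraph q n m φ).Adj (.wvert j) (.path i t) := by
  rw [adj_iff]
  rintro ⟨-, h | h⟩ <;> exact h.elim

lemma not_adj_wk {j j'} {l} {a : Fin (Anum q)} :
    ¬ (cspGraph q n m φ).Adj (.wvert j) (.kvert j' l a) := by
  rw [adj_iff]
  rintro ⟨-, h | h⟩ <;> exact h.elim

lemma not_adj_ww {j j'} :
    ¬ (cspGraph q n m φ).Adj (.wvert j : CVert q n m φ.C) (.wvert j') := by
  rw [adj_iff]
  rintro ⟨-, h | h⟩ <;> exact h.elim

end Stmt11Proof
section Stmt11Proof2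

open Set

variable {q n m : ℕ} {φ : QCSP q n m}

lemma adj_k_PV {j} {l : Fin (φ.C (cIdx j))} {a : Fin (Anum q)} {i : Fin n} {s : Fin 4} :
    (cspGraph q n m φ).Adj (.kvert j l a) (PVx φ.C j i s) ↔
      ∃ p : Fin q, φ.vars (cIdx j) p = i ∧
        (s.val = off1 (φ.sat (cIdx j) l p) ∨ s.val = off2 (φ.sat (cIdx j) l p)) := by
  rw [PVx, adj_kp]
  constructor
  · rintro ⟨p, hp, h | h⟩
    · refine ⟨p, hp, Or.inl ?_⟩
      simp at h; omega
    · refine ⟨p, hp, Or.inr ?_⟩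
      simp at h; omega
  · rintro ⟨p, hp, h | h⟩
    · refine ⟨p, hp, Or.inl ?_⟩
      simp; omega
    · refine ⟨p, hp, Or.inr ?_⟩
      simp; omega

/-- Any `K`-vertex adjacent to a section-`j` row vertex is in `K_j`, with an offset pair. -/
lemma adj_kp_section {j j2} {l : Fin (φ.C (cIdx j2))} {a : Fin (Anum q)} {i : Fin n} {s : Fin 4}
    (h : (cspGraph q n m φ).Adj (.kvert j2 l a) (PVx φ.C j i s)) : j2 = j := by
  rw [PVx, adj_kp] at h
  obtain ⟨p, -, hp⟩ := h
  have h1 := (off_lt (φ.sat (cIdx j2) l p)).1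
  have h2 := (off_lt (φ.sat (cIdx j2) l p)).2.1
  have hs := s.isLt
  apply Fin.ext
  rcases hp with hp | hp <;> simp at hp <;> omega

/-- Existence of private vertices for members of a minimal dominating set. -/
lemma priv_exists {D : Set (CVert q n m φ.C)}
    (hD : MinimalDominatingSet (cspGraph q n m φ) D) {v} (hv : v ∈ D) :
    ∃ x, (x = v ∨ (cspGraph q n m φ).Adj v x) ∧ PrivAt φ D x v := by
  have hsub : D \ {v} ⊂ D := by
    constructor
    · exact Set.diff_subset
    · intro hsub'
      have := hsub' hv
      simp at this
  have hnd := hD.2 _ hsub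
  unfold Dominates at hnd
  push_neg at hnd
  obtain ⟨x, hx1, hx2⟩ := hnd
  have hx1' : x ∈ D → x = v := by
    intro hxD
    by_contra hne
    exact hx1 ⟨hxD, hne⟩
  have hx2' : ∀ u ∈ D, u ≠ v → ¬ (cspGraph q n m φ).Adj u x := by
    intro u hu hne
    exact hx2 u ⟨hu, hne⟩
  refine ⟨x, ?_, ?_⟩
  · rcases hD.1 x with hx | ⟨u, hu, hadj⟩
    · exact Or.inl (hx1' hx)
    · by_cases huv : u = v
      · exact Or.inr (huv ▸ hadj)
      · exact absurd hadj (hx2' u hu huv)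
  · rintro u hu (rfl | hadj)
    · exact hx1' hu
    · by_contra hne
      exact hx2' u hu hne hadj

/-! ### Counting helpers -/

lemma ncard4 {α : Type*} (a b c d : α) : ({a, b, c, d} : Set α).ncard ≤ 4 := by
  have h1 := Set.ncard_insert_le a ({b, c, d} : Set α)
  have h2 := Set.ncard_insert_le b ({c, d} : Set α)
  have h3 := Set.ncard_insert_le c ({d} : Set α)
  have h4 : ({d} : Set α).ncard = 1 := Set.ncard_singleton d
  omega

lemma memThree {α : Type*} {S T : Set α} {x y : α} (hT : T.Finite) (hTc : T.ncard ≤ 4)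
    (hS : S ⊆ T) (hx : x ∈ T) (hy : y ∈ T) (hxy : x ≠ y) (h3 : 3 ≤ S.ncard) :
    x ∈ S ∨ y ∈ S := by
  by_contra h
  push_neg at h
  have hsub : S ⊆ T \ {x, y} := by
    intro z hz
    refine ⟨hS hz, ?_⟩
    rintro (rfl | rfl)
    · exact h.1 hz
    · exact h.2 hz
  have hxyT : ({x, y} : Set α) ⊆ T := by
    rintro z (rfl | rfl) <;> assumption
  have hd : (T \ {x, y}).ncard = T.ncard - 2 := by
    rw [Set.ncard_diff hxyT (Set.finite_singleton y |>.insert x), Set.ncard_pair hxy]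
  have hle := Set.ncard_le_ncard hsub hT.diff
  omega

lemma memFour {α : Type*} {S T : Set α} {x : α} (hT : T.Finite) (hTc : T.ncard ≤ 4)
    (hS : S ⊆ T) (hx : x ∈ T) (h4 : 4 ≤ S.ncard) : x ∈ S := by
  by_contra h
  have hsub : S ⊆ T \ {x} := fun z hz => ⟨hS hz, by rintro rfl; exact h hz⟩
  have hd : (T \ {x}).ncard = T.ncard - 1 := by
    rw [Set.ncard_diff (by simpa using hx) (Set.finite_singleton x), Set.ncard_singleton]
  have hle := Set.ncard_le_ncard hsub hT.diff
  omega

lemma ncard_iUnion_le_sum {α : Type*} {k : ℕ} (f : Fin k → Set α) :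
    (⋃ i, f i).ncard ≤ ∑ i, (f i).ncard := by
  induction k with
  | zero => simp
  | succ k ih =>
    have hU : (⋃ i, f i) = f 0 ∪ ⋃ i : Fin k, f i.succ := by
      ext x
      simp only [Set.mem_iUnion, Set.mem_union, Fin.exists_fin_succ]
    rw [hU, Fin.sum_univ_succ]
    exact le_trans (Set.ncard_union_le _ _) (Nat.add_le_add le_rfl (ih _))

lemma Qrow_eq {C : Fin m → ℕ} (j : Fin (Fnum n * m)) (i : Fin n) :
    Qrow (q := q) C j i = {PVx C j i 0, PVx C j i 1, PVx C j i 2, PVx C j i 3} := by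
  ext x
  constructor
  · rintro ⟨s, rfl⟩
    have : s = 0 ∨ s = 1 ∨ s = 2 ∨ s = 3 := by omega
    rcases this with rfl | rfl | rfl | rfl <;> simp [Set.mem_insert_iff]
  · rintro (rfl | rfl | rfl | rfl)
    exacts [⟨0, rfl⟩, ⟨1, rfl⟩, ⟨2, rfl⟩, ⟨3, rfl⟩]

lemma Qrow_finite {C : Fin m → ℕ} (j : Fin (Fnum n * m)) (i : Fin n) :
    (Qrow (q := q) C j i).Finite := Set.finite_range _

lemma Qrow_ncard {C : Fin m → ℕ} (j : Fin (Fnum n * m)) (i : Fin n) :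
    (Qrow (q := q) C j i).ncard ≤ 4 := by
  rw [Qrow_eq]; exact ncard4 _ _ _ _

lemma LpartNM_ncard {C : Fin m → ℕ} (j : Fin (Fnum n * m)) (l : Fin (C (cIdx j)))
    (a : Fin (Anum q)) : (LpartNM (q := q) C j l a).ncard = Anum q - 1 := by
  rw [LpartNM, Set.ncard_image_of_injective _ (fun x y h => by simpa using h)]
  have : ({a}ᶜ : Set (Fin (Anum q))) = Set.univ \ {a} := by simp [Set.compl_eq_univ_diff]
  rw [this, Set.ncard_diff (Set.subset_univ _), Set.ncard_singleton, Set.ncard_univ]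
  simp

lemma KpartNM_ncard {C : Fin m → ℕ} (j : Fin (Fnum n * m)) (l : Fin (C (cIdx j)))
    (a : Fin (Anum q)) : (KpartNM (q := q) C j l a).ncard = Anum q - 1 := by
  rw [KpartNM, Set.ncard_image_of_injective _ (fun x y h => by simpa using h)]
  have : ({a}ᶜ : Set (Fin (Anum q))) = Set.univ \ {a} := by simp [Set.compl_eq_univ_diff]
  rw [this, Set.ncard_diff (Set.subset_univ _), Set.ncard_singleton, Set.ncard_univ]
  simp

lemma LpartNM_finite {C : Fin m → ℕ} (j : Fin (Fnum n * m)) (l : Fin (C (cIdx j)))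
    (a : Fin (Anum q)) : (LpartNM (q := q) C j l a).Finite :=
  Set.Finite.image _ (Set.toFinite _)

lemma KpartNM_finite {C : Fin m → ℕ} (j : Fin (Fnum n * m)) (l : Fin (C (cIdx j)))
    (a : Fin (Anum q)) : (KpartNM (q := q) C j l a).Finite :=
  Set.Finite.image _ (Set.toFinite _)

lemma Pths_finite (j : Fin (Fnum n * m)) : (Pths φ j).Finite :=
  Set.Finite.image _ (Set.toFinite _)

lemma Pths_ncard (j : Fin (Fnum n * m)) : (Pths φ j).ncard ≤ 4 * q := by
  rw [Pths]
  refine le_trans (Set.ncard_image_le (Set.toFinite _)) ?_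
  have h4 : Nat.card (Fin q × Fin 4) = q * 4 := by simp [Nat.card_eq_fintype_card]
  rw [Set.ncard_univ, h4]
  omega

lemma Kset_finite {C : Fin m → ℕ} (j : Fin (Fnum n * m)) : (Kset (q := q) C j).Finite := by
  have : Kset (q := q) C j =
      Set.range (fun p : Fin (C (cIdx j)) × Fin (Anum q) => (.kvert j p.1 p.2 : CVert q n m C)) := by
    ext x
    constructor
    · rintro ⟨l, a, rfl⟩; exact ⟨(l, a), rfl⟩
    · rintro ⟨⟨l, a⟩, rfl⟩; exact ⟨l, a, rfl⟩
  rw [this]; exact Set.finite_range _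

lemma Lset_finite {C : Fin m → ℕ} (j : Fin (Fnum n * m)) : (Lset (q := q) C j).Finite := by
  have : Lset (q := q) C j =
      Set.range (fun p : Fin (C (cIdx j)) × Fin (Anum q) => (.lvert j p.1 p.2 : CVert q n m C)) := by
    ext x
    constructor
    · rintro ⟨l, a, rfl⟩; exact ⟨(l, a), rfl⟩
    · rintro ⟨⟨l, a⟩, rfl⟩; exact ⟨l, a, rfl⟩
  rw [this]; exact Set.finite_range _

end Stmt11Proof2
section Stmt11Proof3

open Set

variable {q n m : ℕ} {φ : QCSP q n m}

lemma PV_ne {j : Fin (Fnum n * m)} {i i' : Fin n} {s s' : Fin 4}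
    (h : PVx φ.C j i s = PVx (q := q) φ.C j i' s') (hne : s ≠ s') : False :=
  hne (PVx_inj h).2

lemma adj_PV_succ {j : Fin (Fnum n * m)} {i : Fin n} {s s' : Fin 4}
    (h : s'.val = s.val + 1) :
    (cspGraph q n m φ).Adj (PVx φ.C j i s) (PVx φ.C j i s') := by
  rw [PVx, PVx, adj_pp]
  exact ⟨rfl, Or.inl (by simp; omega)⟩

lemma pivot1 {D : Set (CVert q n m φ.C)} (hD : MinimalDominatingSet (cspGraph q n m φ) D)
    (j : Fin (Fnum n * m)) (i : Fin n)
    (h0 : PVx φ.C j i 0 ∈ D) (h1 : PVx φ.C j i 1 ∈ D)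
    (h23 : PVx φ.C j i 2 ∈ D ∨ PVx φ.C j i 3 ∈ D) :
    ∃ (l : Fin (φ.C (cIdx j))) (a : Fin (Anum q)) (p : Fin q) (s : Fin 4),
      φ.vars (cIdx j) p = i ∧
      (s.val = off1 (φ.sat (cIdx j) l p) ∨ s.val = off2 (φ.sat (cIdx j) l p)) ∧
      PVx φ.C j i s ∈ D ∧ PrivAt φ D (.kvert j l a) (PVx φ.C j i s) := by
  obtain ⟨x, hxN, hxP⟩ := priv_exists hD h1
  rcases hxN with rfl | hadj
  · exact absurd (hxP _ h0 (Or.inr (adj_PV_succ (by decide)))) (fun h => PV_ne h (by decide))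
  · cases x with
    | path i' t' =>
      rw [PVx, adj_pp] at hadj
      obtain ⟨hi, hadj⟩ := hadj
      subst hi
      rcases hadj with hv | hv
      · have hx2 : (.path i t' : CVert q n m φ.C) = PVx φ.C j i 2 := by
          rw [PVx]; congr 1; apply Fin.ext; simp at hv ⊢; omega
        rcases h23 with h2 | h3
        · exact absurd (hxP _ h2 (Or.inl hx2.symm)) (fun h => PV_ne h (by decide))
        · have ha32 : (cspGraph q n m φ).Adj (PVx φ.C j i 3) (.path i t') := by
            rw [hx2]
            exact ((adj_PV_succ (s := 2) (s' := 3) (by decide)).symm :)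
          exact absurd (hxP _ h3 (Or.inr ha32)) (fun h => PV_ne h (by decide))
      · have hx0 : (.path i t' : CVert q n m φ.C) = PVx φ.C j i 0 := by
          rw [PVx]; congr 1; apply Fin.ext; simp at hv ⊢; omega
        exact absurd (hxP _ h0 (Or.inl hx0.symm)) (fun h => PV_ne h (by decide))
    | kvert j2 l a =>
      have hj : j2 = j := adj_kp_section hadj.symm
      subst hj
      obtain ⟨p, hp, hoff⟩ := adj_k_PV.mp hadj.symm
      exact ⟨l, a, p, 1, hp, hoff, h1, hxP⟩
    | lvert j2 l a => exact absurd hadj.symm not_adj_lp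
    | wvert j2 => exact absurd hadj.symm not_adj_wp

lemma pivot2 {D : Set (CVert q n m φ.C)} (hD : MinimalDominatingSet (cspGraph q n m φ) D)
    (j : Fin (Fnum n * m)) (i : Fin n)
    (h2 : PVx φ.C j i 2 ∈ D) (h3 : PVx φ.C j i 3 ∈ D)
    (h01 : PVx φ.C j i 0 ∈ D ∨ PVx φ.C j i 1 ∈ D) :
    ∃ (l : Fin (φ.C (cIdx j))) (a : Fin (Anum q)) (p : Fin q) (s : Fin 4),
      φ.vars (cIdx j) p = i ∧
      (s.val = off1 (φ.sat (cIdx j) l p) ∨ s.val = off2 (φ.sat (cIdx j) l p)) ∧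
      PVx φ.C j i s ∈ D ∧ PrivAt φ D (.kvert j l a) (PVx φ.C j i s) := by
  obtain ⟨x, hxN, hxP⟩ := priv_exists hD h2
  rcases hxN with rfl | hadj
  · exact absurd (hxP _ h3 (Or.inr (adj_PV_succ (by decide)).symm)) (fun h => PV_ne h (by decide))
  · cases x with
    | path i' t' =>
      rw [PVx, adj_pp] at hadj
      obtain ⟨hi, hadj⟩ := hadj
      subst hi
      rcases hadj with hv | hv
      · have hx3 : (.path i t' : CVert q n m φ.C) = PVx φ.C j i 3 := by
          rw [PVx]; congr 1; apply Fin.ext; simp at hv ⊢; omega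
        exact absurd (hxP _ h3 (Or.inl hx3.symm)) (fun h => PV_ne h (by decide))
      · have hx1 : (.path i t' : CVert q n m φ.C) = PVx φ.C j i 1 := by
          rw [PVx]; congr 1; apply Fin.ext; simp at hv ⊢; omega
        rcases h01 with h0 | h1
        · have ha01 : (cspGraph q n m φ).Adj (PVx φ.C j i 0) (.path i t') := by
            rw [hx1]
            exact adj_PV_succ (by decide)
          exact absurd (hxP _ h0 (Or.inr ha01)) (fun h => PV_ne h (by decide))
        · exact absurd (hxP _ h1 (Or.inl hx1.symm)) (fun h => PV_ne h (by decide))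
    | kvert j2 l a =>
      have hj : j2 = j := adj_kp_section hadj.symm
      subst hj
      obtain ⟨p, hp, hoff⟩ := adj_k_PV.mp hadj.symm
      exact ⟨l, a, p, 2, hp, hoff, h2, hxP⟩
    | lvert j2 l a => exact absurd hadj.symm not_adj_lp
    | wvert j2 => exact absurd hadj.symm not_adj_wp

lemma pivot {D : Set (CVert q n m φ.C)} (hD : MinimalDominatingSet (cspGraph q n m φ) D)
    (j : Fin (Fnum n * m)) (i : Fin n) (h3c : 3 ≤ (D ∩ Qrow φ.C j i).ncard) :
    ∃ (l : Fin (φ.C (cIdx j))) (a : Fin (Anum q)) (p : Fin q) (s : Fin 4),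
      φ.vars (cIdx j) p = i ∧
      (s.val = off1 (φ.sat (cIdx j) l p) ∨ s.val = off2 (φ.sat (cIdx j) l p)) ∧
      PVx φ.C j i s ∈ D ∧ PrivAt φ D (.kvert j l a) (PVx φ.C j i s) := by
  have two : ∀ (s s' : Fin 4), s ≠ s' → PVx φ.C j i s ∈ D ∨ PVx φ.C j i s' ∈ D := by
    intro s s' hss
    have hmem : ∀ s : Fin 4, PVx (q := q) φ.C j i s ∈ Qrow (q := q) φ.C j i :=
      fun s => Set.mem_range_self s
    have := memThree (Qrow_finite j i) (Qrow_ncard j i) Set.inter_subset_right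
      (hmem s) (hmem s') (fun h => hss (PVx_inj h).2) h3c
    rcases this with h | h
    exacts [Or.inl h.1, Or.inr h.1]
  have t01 := two 0 1 (by decide)
  have t23 := two 2 3 (by decide)
  have t02 := two 0 2 (by decide)
  have t03 := two 0 3 (by decide)
  have t12 := two 1 2 (by decide)
  have t13 := two 1 3 (by decide)
  have hpat : (PVx φ.C j i 0 ∈ D ∧ PVx φ.C j i 1 ∈ D ∧ (PVx φ.C j i 2 ∈ D ∨ PVx φ.C j i 3 ∈ D)) ∨
      (PVx φ.C j i 2 ∈ D ∧ PVx φ.C j i 3 ∈ D ∧ (PVx φ.C j i 0 ∈ D ∨ PVx φ.C j i 1 ∈ D)) := by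
    tauto
  rcases hpat with ⟨h0, h1, h23⟩ | ⟨h2, h3, h01⟩
  · exact pivot1 hD j i h0 h1 h23
  · exact pivot2 hD j i h2 h3 h01

end Stmt11Proof3
section Stmt11Proof4

open Set

variable {q n m : ℕ} {φ : QCSP q n m}

lemma wD_L_empty {D : Set (CVert q n m φ.C)} (hD : MinimalDominatingSet (cspGraph q n m φ) D)
    (j : Fin (Fnum n * m)) (hw : (.wvert j : CVert q n m φ.C) ∈ D) :
    D ∩ Lset φ.C j = ∅ := by
  apply Set.eq_empty_iff_forall_notMem.mpr
  rintro y ⟨hyD, l, a, rfl⟩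
  obtain ⟨z, hzN, hzP⟩ := priv_exists hD hw
  rcases hzN with rfl | hadj
  · have := hzP _ hyD (Or.inr (adj_wl.mpr rfl).symm)
    simp at this
  · cases z with
    | path i t => exact not_adj_wp hadj
    | kvert j2 l2 a2 => exact not_adj_wk hadj
    | wvert j2 => exact not_adj_ww hadj
    | lvert j2 l2 a2 =>
      have hj : j = j2 := by
        rw [adj_iff] at hadj
        rcases hadj with ⟨-, h | h⟩
        · exact h
        · exact h.elim
      subst hj
      by_cases hyz : (.lvert j l a : CVert q n m φ.C) = .lvert j l2 a2
      · have := hzP _ hyD (Or.inl hyz)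
        simp at this
      · have := hzP _ hyD (Or.inr (adj_ll.mpr (fun hh => hyz (by rw [hh.1, hh.2]))))
        simp at this

lemma K_path_bound {D : Set (CVert q n m φ.C)} (hD : MinimalDominatingSet (cspGraph q n m φ) D)
    (j : Fin (Fnum n * m))
    (hL : ∀ v ∈ D ∩ Kset φ.C j, ∀ z ∈ Lset φ.C j,
        ¬ ((z = v ∨ (cspGraph q n m φ).Adj v z) ∧ PrivAt φ D z v))
    (h2 : 2 ≤ (D ∩ Kset φ.C j).ncard) :
    (D ∩ Kset φ.C j).ncard ≤ 4 * q := by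
  classical
  have hex : ∀ v ∈ D ∩ Kset φ.C j, ∃ z, z ∈ Pths φ j ∧
      (z = v ∨ (cspGraph q n m φ).Adj v z) ∧ PrivAt φ D z v := by
    rintro v ⟨hvD, l, a, rfl⟩
    obtain ⟨z, hzN, hzP⟩ := priv_exists hD hvD
    obtain ⟨v', hv'K, hv'ne⟩ := Set.exists_ne_of_one_lt_ncard (s := D ∩ Kset φ.C j)
      (by omega) (CVert.kvert j l a)
    have hv'D := hv'K.1
    obtain ⟨l', a', hv'⟩ := hv'K.2
    subst hv'
    refine ⟨z, ?_, hzN, hzP⟩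
    cases z with
    | kvert j2 l2 a2 =>
      have hzK : j = j2 := by
        rcases hzN with he | hadj
        · injection he with h1 h2 h3
          exact h1.symm
        · exact adj_kk_cross hadj
      subst hzK
      by_cases hv'z : (.kvert j l' a' : CVert q n m φ.C) = .kvert j l2 a2
      · exact absurd (hzP _ hv'D (Or.inl hv'z)) hv'ne
      · exact absurd (hzP _ hv'D (Or.inr (adj_kk.mpr (fun hh => hv'z (by rw [hh.1, hh.2])))))
          hv'ne
    | lvert j2 l2 a2 =>
      rcases hzN with he | hadj
      · exact absurd he (by simp)
      · have hj : j = j2 := adj_kl_cross hadj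
        subst hj
        exact absurd ⟨Or.inr hadj, hzP⟩ (hL _ ⟨hvD, l, a, rfl⟩ _ ⟨l2, a2, rfl⟩)
    | wvert j2 =>
      rcases hzN with he | hadj
      · exact absurd he (by simp)
      · exact absurd hadj (by rw [adj_iff]; rintro ⟨-, h | h⟩ <;> exact h.elim)
    | path i t =>
      rcases hzN with he | hadj
      · exact absurd he (by simp)
      · obtain ⟨p, hp, hoff⟩ := adj_kp.mp hadj
        rcases hoff with h | h
        · refine ⟨(p, ⟨off1 (φ.sat (cIdx j) l p), (off_lt _).1⟩), Set.mem_univ _, ?_⟩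
          show PVx φ.C j (φ.vars (cIdx j) p) ⟨off1 (φ.sat (cIdx j) l p), (off_lt _).1⟩
            = CVert.path i t
          rw [PVx, hp]
          congr 1
          apply Fin.ext
          simp
          omega
        · refine ⟨(p, ⟨off2 (φ.sat (cIdx j) l p), (off_lt _).2.1⟩), Set.mem_univ _, ?_⟩
          show PVx φ.C j (φ.vars (cIdx j) p) ⟨off2 (φ.sat (cIdx j) l p), (off_lt _).2.1⟩
            = CVert.path i t
          rw [PVx, hp]
          congr 1
          apply Fin.ext
          simp
          omega
  set f : CVert q n m φ.C → CVert q n m φ.C := fun v =>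
    if h : ∃ z, z ∈ Pths φ j ∧ (z = v ∨ (cspGraph q n m φ).Adj v z) ∧ PrivAt φ D z v
    then h.choose else v with hf
  have hmaps : ∀ v ∈ D ∩ Kset φ.C j, f v ∈ Pths φ j := by
    intro v hv
    rw [hf]
    simp only [dif_pos (hex v hv)]
    exact (hex v hv).choose_spec.1
  have hinj : Set.InjOn f (D ∩ Kset φ.C j) := by
    intro v1 h1 v2 h2 heq
    rw [hf] at heq
    simp only [dif_pos (hex v1 h1), dif_pos (hex v2 h2)] at heq
    have hP1 := (hex v1 h1).choose_spec.2.2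
    have h2N := (hex v2 h2).choose_spec.2.1
    have : v2 = v1 := by
      apply hP1 v2 h2.1
      rcases h2N with hz | hz
      · exact Or.inl (by rw [heq, hz])
      · exact Or.inr (by rw [heq]; exact hz)
    exact this.symm
  exact le_trans (Set.ncard_le_ncard_of_injOn f hmaps hinj (Pths_finite j)) (Pths_ncard j)

lemma gadgetA {D : Set (CVert q n m φ.C)} (hD : MinimalDominatingSet (cspGraph q n m φ) D)
    (j : Fin (Fnum n * m)) :
    (D ∩ Kset φ.C j).ncard + (D ∩ Lset φ.C j).ncard
      + (D ∩ {(.wvert j : CVert q n m φ.C)}).ncard ≤ Anum q := by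
  classical
  have hA : Anum q = 4 * q + 2 := rfl
  have hgw : (D ∩ {(.wvert j : CVert q n m φ.C)}).ncard ≤ 1 := by
    refine le_trans (Set.ncard_le_ncard Set.inter_subset_right (Set.finite_singleton _)) ?_
    simp
  by_cases hw : (.wvert j : CVert q n m φ.C) ∈ D
  · have hLe : D ∩ Lset φ.C j = ∅ := wD_L_empty hD j hw
    have hLbad : ∀ v ∈ D ∩ Kset φ.C j, ∀ z ∈ Lset φ.C j,
        ¬ ((z = v ∨ (cspGraph q n m φ).Adj v z) ∧ PrivAt φ D z v) := by
      rintro v ⟨hvD, lv, av, rfl⟩ z ⟨lz, az, rfl⟩ ⟨-, hP⟩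
      have := hP _ hw (Or.inr (adj_wl.mpr rfl))
      simp at this
    rw [hLe]
    simp only [Set.ncard_empty]
    by_cases h2 : 2 ≤ (D ∩ Kset φ.C j).ncard
    · have := K_path_bound hD j hLbad h2
      omega
    · omega
  · have hgw0 : D ∩ {(.wvert j : CVert q n m φ.C)} = ∅ := by
      apply Set.eq_empty_iff_forall_notMem.mpr
      rintro x ⟨hxD, rfl⟩
      exact hw hxD
    rw [hgw0]
    simp only [Set.ncard_empty]
    by_cases hLemp : D ∩ Lset φ.C j = ∅
    · rw [hLemp]
      simp only [Set.ncard_empty]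
      by_cases h2 : 2 ≤ (D ∩ Kset φ.C j).ncard
      · by_cases hpe : ∃ v ∈ D ∩ Kset φ.C j, ∃ z ∈ Lset φ.C j,
            (z = v ∨ (cspGraph q n m φ).Adj v z) ∧ PrivAt φ D z v
        · obtain ⟨v, hvK, z, hzL, -, hzP⟩ := hpe
          obtain ⟨lz, az, rfl⟩ := hzL
          have hsub : D ∩ Kset φ.C j ⊆ {v} ∪ KpartNM φ.C j lz az := by
            rintro u ⟨huD, lu, au, rfl⟩
            by_cases hadj : (lu.val = lz.val → au = az)
            · exact Or.inl (hzP _ huD (Or.inr (adj_kl.mpr hadj)))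
            · push_neg at hadj
              obtain ⟨h1, h2'⟩ := hadj
              have hle : lu = lz := Fin.ext h1
              subst hle
              exact Or.inr ⟨au, by simpa using h2', rfl⟩
          have hb := le_trans (Set.ncard_le_ncard hsub
            ((Set.finite_singleton _).union (KpartNM_finite j lz az)))
            (le_trans (Set.ncard_union_le _ _)
              (by rw [Set.ncard_singleton, KpartNM_ncard]))
          omega
        · push_neg at hpe
          have hLbad : ∀ v ∈ D ∩ Kset φ.C j, ∀ z ∈ Lset φ.C j,
              ¬ ((z = v ∨ (cspGraph q n m φ).Adj v z) ∧ PrivAt φ D z v) := by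
            intro v hv z hz hcon
            exact hpe v hv z hz hcon.1 hcon.2
          have := K_path_bound hD j hLbad h2
          omega
      · omega
    · obtain ⟨y, hy⟩ := Set.nonempty_iff_ne_empty.mpr hLemp
      obtain ⟨hyD, ly, ay, rfl⟩ := hy
      obtain ⟨z, hzN, hzP⟩ := priv_exists hD hyD
      cases z with
      | path i t =>
        rcases hzN with he | hadj
        · exact absurd he (by simp)
        · exact absurd hadj not_adj_lp
      | wvert j2 =>
        rcases hzN with he | hadj
        · exact absurd he (by simp)
        · have hj : j2 = j := by
            rw [adj_iff] at hadj
            rcases hadj with ⟨-, h | h⟩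
            · exact h.elim
            · exact h
          rw [hj] at hzP
          have hLsub : D ∩ Lset φ.C j ⊆ {(.lvert j ly ay : CVert q n m φ.C)} := by
            rintro u ⟨huD, lu, au, rfl⟩
            exact hzP _ huD (Or.inr (adj_wl.mpr rfl).symm)
          have hgL : (D ∩ Lset φ.C j).ncard ≤ 1 := by
            refine le_trans (Set.ncard_le_ncard hLsub (Set.finite_singleton _)) ?_
            simp
          have hLbad : ∀ v ∈ D ∩ Kset φ.C j, ∀ z' ∈ Lset φ.C j,
              ¬ ((z' = v ∨ (cspGraph q n m φ).Adj v z') ∧ PrivAt φ D z' v) := by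
            rintro v ⟨hvD, lv, av, rfl⟩ z' ⟨lz, az, rfl⟩ ⟨-, hP⟩
            by_cases hyz : (.lvert j ly ay : CVert q n m φ.C) = .lvert j lz az
            · have := hP _ hyD (Or.inl hyz)
              simp at this
            · have := hP _ hyD (Or.inr (adj_ll.mpr (fun hh => hyz (by rw [hh.1, hh.2]))))
              simp at this
          by_cases h2 : 2 ≤ (D ∩ Kset φ.C j).ncard
          · have := K_path_bound hD j hLbad h2
            omega
          · omega
      | kvert j2 lz az =>
        rcases hzN with he | hadj
        · exact absurd he (by simp)
        · have hj : j = j2 := (adj_kl_cross hadj.symm).symm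
          subst hj
          have hKe : D ∩ Kset φ.C j = ∅ := by
            apply Set.eq_empty_iff_forall_notMem.mpr
            rintro u ⟨huD, lu, au, rfl⟩
            by_cases huz : (.kvert j lu au : CVert q n m φ.C) = .kvert j lz az
            · have := hzP _ huD (Or.inl huz)
              simp at this
            · have := hzP _ huD (Or.inr (adj_kk.mpr (fun hh => huz (by rw [hh.1, hh.2]))))
              simp at this
          have hsub : D ∩ Lset φ.C j ⊆
              {(.lvert j ly ay : CVert q n m φ.C)} ∪ LpartNM φ.C j lz az := by
            rintro u ⟨huD, lu, au, rfl⟩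
            by_cases hadj2 : (lz.val = lu.val → az = au)
            · exact Or.inl (hzP _ huD (Or.inr (adj_kl.mpr hadj2).symm))
            · push_neg at hadj2
              obtain ⟨h1, h2'⟩ := hadj2
              have hle : lu = lz := Fin.ext h1.symm
              subst hle
              exact Or.inr ⟨au, by simpa using (Ne.symm h2'), rfl⟩
          have hb := le_trans (Set.ncard_le_ncard hsub
            ((Set.finite_singleton _).union (LpartNM_finite j lz az)))
            (le_trans (Set.ncard_union_le _ _)
              (by rw [Set.ncard_singleton, LpartNM_ncard]))
          rw [hKe]
          simp only [Set.ncard_empty]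
          omega
      | lvert j2 lz az =>
        have hj : j = j2 := by
          rcases hzN with he | hadj
          · injection he with h1 h2 h3
            exact h1.symm
          · exact adj_ll_cross hadj
        subst hj
        have hLsub : D ∩ Lset φ.C j ⊆ {(.lvert j ly ay : CVert q n m φ.C)} := by
          rintro u ⟨huD, lu, au, rfl⟩
          by_cases huz : (.lvert j lu au : CVert q n m φ.C) = .lvert j lz az
          · exact hzP _ huD (Or.inl huz)
          · exact hzP _ huD (Or.inr (adj_ll.mpr (fun hh => huz (by rw [hh.1, hh.2]))))
        have hgL : (D ∩ Lset φ.C j).ncard ≤ 1 := by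
          refine le_trans (Set.ncard_le_ncard hLsub (Set.finite_singleton _)) ?_
          simp
        have hKsub : D ∩ Kset φ.C j ⊆ KpartNM φ.C j lz az := by
          rintro u ⟨huD, lu, au, rfl⟩
          by_cases hadj2 : (lu.val = lz.val → au = az)
          · have := hzP _ huD (Or.inr (adj_kl.mpr hadj2))
            simp at this
          · push_neg at hadj2
            obtain ⟨h1, h2'⟩ := hadj2
            have hle : lu = lz := Fin.ext h1
            subst hle
            exact ⟨au, by simpa using h2', rfl⟩
        have hgK := le_trans (Set.ncard_le_ncard hKsub (KpartNM_finite j lz az))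
          (le_of_eq (KpartNM_ncard j lz az))
        omega

end Stmt11Proof4
theorem stmt11 (q n m : ℕ) (φ : QCSP q n m)
    (D : Set (CVert q n m φ.C))
    (hD : MinimalDominatingSet (cspGraph q n m φ) D)
    (hmax : ∀ D' : Set (CVert q n m φ.C),
      MinimalDominatingSet (cspGraph q n m φ) D' → D'.ncard ≤ D.ncard) :
    ∀ j : Fin (Fnum n * m), (D ∩ Vsec q n m φ.C j).ncard ≤ 2 * n + Anum q := by
  classical
  intro j
  have hA : Anum q = 4 * q + 2 := rfl
  have hKfin : (D ∩ Kset φ.C j).Finite := (Kset_finite j).subset Set.inter_subset_right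
  have hLfin : (D ∩ Lset φ.C j).Finite := (Lset_finite j).subset Set.inter_subset_right
  have hWfin : (D ∩ {(.wvert j : CVert q n m φ.C)}).Finite :=
    (Set.finite_singleton _).subset Set.inter_subset_right
  have hQfin : ∀ i : Fin n, (D ∩ Qrow φ.C j i).Finite :=
    fun i => (Qrow_finite j i).subset Set.inter_subset_right
  have hVsub : D ∩ Vsec q n m φ.C j ⊆
      (D ∩ Kset φ.C j) ∪ ((D ∩ Lset φ.C j) ∪ ((D ∩ {(.wvert j : CVert q n m φ.C)})
        ∪ (⋃ i : Fin n, D ∩ Qrow φ.C j i))) := by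
    rintro x ⟨hxD, hxV⟩
    cases x with
    | path i t =>
      have hxV' : ∃ s : ℕ, s < 4 ∧ t.val = 4 * j.val + s + 3 := hxV
      obtain ⟨s, hs, ht⟩ := hxV'
      refine Or.inr (Or.inr (Or.inr ?_))
      rw [Set.mem_iUnion]
      refine ⟨i, hxD, ⟨⟨s, hs⟩, ?_⟩⟩
      show PVx φ.C j i ⟨s, hs⟩ = CVert.path i t
      rw [PVx]
      congr 1
      exact Fin.ext (by simp; omega)
    | kvert j2 l a =>
      have hj : j2 = j := hxV
      subst hj
      exact Or.inl ⟨hxD, l, a, rfl⟩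
    | lvert j2 l a =>
      have hj : j2 = j := hxV
      subst hj
      exact Or.inr (Or.inl ⟨hxD, l, a, rfl⟩)
    | wvert j2 =>
      have hj : j2 = j := hxV
      subst hj
      exact Or.inr (Or.inr (Or.inl ⟨hxD, rfl⟩))
  have hfinR : ((D ∩ Kset φ.C j) ∪ ((D ∩ Lset φ.C j) ∪ ((D ∩ {(.wvert j : CVert q n m φ.C)})
      ∪ (⋃ i : Fin n, D ∩ Qrow φ.C j i)))).Finite :=
    hKfin.union (hLfin.union (hWfin.union (Set.finite_iUnion hQfin)))
  have h1 := Set.ncard_le_ncard hVsub hfinR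
  have h2 := Set.ncard_union_le (D ∩ Kset φ.C j) ((D ∩ Lset φ.C j)
    ∪ ((D ∩ {(.wvert j : CVert q n m φ.C)}) ∪ (⋃ i : Fin n, D ∩ Qrow φ.C j i)))
  have h3 := Set.ncard_union_le (D ∩ Lset φ.C j)
    ((D ∩ {(.wvert j : CVert q n m φ.C)}) ∪ (⋃ i : Fin n, D ∩ Qrow φ.C j i))
  have h4 := Set.ncard_union_le (D ∩ {(.wvert j : CVert q n m φ.C)})
    (⋃ i : Fin n, D ∩ Qrow φ.C j i)
  have h5 := ncard_iUnion_le_sum (fun i : Fin n => D ∩ Qrow φ.C j i)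
  have hfinal := le_trans h1 (le_trans h2 (Nat.add_le_add le_rfl (le_trans h3
    (Nat.add_le_add le_rfl (le_trans h4 (Nat.add_le_add le_rfl h5))))))
  have hgw1 : (D ∩ {(.wvert j : CVert q n m φ.C)}).ncard ≤ 1 := by
    refine le_trans (Set.ncard_le_ncard Set.inter_subset_right (Set.finite_singleton _)) ?_
    simp
  by_cases hcase : ∃ i : Fin n, 3 ≤ (D ∩ Qrow φ.C j i).ncard
  · obtain ⟨i0, h3c⟩ := hcase
    obtain ⟨l, a, p, s, hp, hoff, hsD, hP⟩ := pivot hD j i0 h3c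
    have hKe : D ∩ Kset φ.C j = ∅ := by
      apply Set.eq_empty_iff_forall_notMem.mpr
      rintro u ⟨huD, lu, au, rfl⟩
      by_cases hux : (.kvert j lu au : CVert q n m φ.C) = .kvert j l a
      · have := hP _ huD (Or.inl hux)
        simp [PVx] at this
      · have := hP _ huD (Or.inr (adj_kk.mpr (fun hh => hux (by rw [hh.1, hh.2]))))
        simp [PVx] at this
    have hLsub : D ∩ Lset φ.C j ⊆ LpartNM φ.C j l a := by
      rintro u ⟨huD, lu, au, rfl⟩
      by_cases hadj : (l.val = lu.val → a = au)
      · have := hP _ huD (Or.inr (adj_kl.mpr hadj).symm)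
        simp [PVx] at this
      · push_neg at hadj
        obtain ⟨h1', h2'⟩ := hadj
        have hlu : lu = l := Fin.ext h1'.symm
        subst hlu
        exact ⟨au, by simpa using (Ne.symm h2'), rfl⟩
    have hgad : (D ∩ Kset φ.C j).ncard + (D ∩ Lset φ.C j).ncard
        + (D ∩ {(.wvert j : CVert q n m φ.C)}).ncard ≤ Anum q - 1 := by
      rw [hKe]
      simp only [Set.ncard_empty]
      by_cases hw : (.wvert j : CVert q n m φ.C) ∈ D
      · rw [wD_L_empty hD j hw]
        simp only [Set.ncard_empty]
        omega
      · have hgw0 : D ∩ {(.wvert j : CVert q n m φ.C)} = ∅ := by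
          apply Set.eq_empty_iff_forall_notMem.mpr
          rintro x ⟨hxD, rfl⟩
          exact hw hxD
        rw [hgw0]
        simp only [Set.ncard_empty]
        have hb := le_trans (Set.ncard_le_ncard hLsub (LpartNM_finite j l a))
          (le_of_eq (LpartNM_ncard j l a))
        omega
    have hrow : ∀ i', i' ≠ i0 → (D ∩ Qrow φ.C j i').ncard ≤ 2 := by
      intro i' hne
      by_contra hgt
      push_neg at hgt
      obtain ⟨l2, a2, p2, s2, hp2, -, -, -⟩ := pivot hD j i' (show 3 ≤ (D ∩ Qrow φ.C j i').ncard by omega)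
      have hlt1 := (off_lt (φ.sat (cIdx j) l p2)).1
      have hlt2 := (off_lt (φ.sat (cIdx j) l p2)).2.1
      have hne12 := (off_lt (φ.sat (cIdx j) l p2)).2.2
      have hadj1 : (cspGraph q n m φ).Adj (.kvert j l a)
          (PVx φ.C j i' ⟨off1 (φ.sat (cIdx j) l p2), hlt1⟩) :=
        adj_k_PV.mpr ⟨p2, hp2, Or.inl rfl⟩
      have hadj2 : (cspGraph q n m φ).Adj (.kvert j l a)
          (PVx φ.C j i' ⟨off2 (φ.sat (cIdx j) l p2), hlt2⟩) :=
        adj_k_PV.mpr ⟨p2, hp2, Or.inr rfl⟩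
      have hm := memThree (Qrow_finite j i') (Qrow_ncard j i') Set.inter_subset_right
        (Set.mem_range_self _) (Set.mem_range_self _)
        (show PVx φ.C j i' ⟨off1 (φ.sat (cIdx j) l p2), hlt1⟩ ≠
            PVx φ.C j i' ⟨off2 (φ.sat (cIdx j) l p2), hlt2⟩ from
          fun h => hne12 (congrArg Fin.val (PVx_inj h).2))
        (show 3 ≤ (D ∩ Qrow φ.C j i').ncard by omega)
      rcases hm with hm | hm
      · exact hne (PVx_inj (hP _ hm.1 (Or.inr hadj1.symm))).1
      · exact hne (PVx_inj (hP _ hm.1 (Or.inr hadj2.symm))).1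
    have hrow0 : (D ∩ Qrow φ.C j i0).ncard ≤ 3 := by
      by_contra h4'
      push_neg at h4'
      have hol := off_lt (φ.sat (cIdx j) l p)
      rcases hoff with ho | ho
      · have hadj' : (cspGraph q n m φ).Adj (.kvert j l a)
            (PVx φ.C j i0 ⟨off2 (φ.sat (cIdx j) l p), hol.2.1⟩) :=
          adj_k_PV.mpr ⟨p, hp, Or.inr rfl⟩
        have hm := memFour (Qrow_finite j i0) (Qrow_ncard j i0) Set.inter_subset_right
          (Set.mem_range_self (⟨off2 (φ.sat (cIdx j) l p), hol.2.1⟩ : Fin 4))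
          (show 4 ≤ (D ∩ Qrow φ.C j i0).ncard by omega)
        have hv := congrArg Fin.val (PVx_inj (hP _ hm.1 (Or.inr hadj'.symm))).2
        simp at hv
        omega
      · have hadj' : (cspGraph q n m φ).Adj (.kvert j l a)
            (PVx φ.C j i0 ⟨off1 (φ.sat (cIdx j) l p), hol.1⟩) :=
          adj_k_PV.mpr ⟨p, hp, Or.inl rfl⟩
        have hm := memFour (Qrow_finite j i0) (Qrow_ncard j i0) Set.inter_subset_right
          (Set.mem_range_self (⟨off1 (φ.sat (cIdx j) l p), hol.1⟩ : Fin 4))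
          (show 4 ≤ (D ∩ Qrow φ.C j i0).ncard by omega)
        have hv := congrArg Fin.val (PVx_inj (hP _ hm.1 (Or.inr hadj'.symm))).2
        simp at hv
        omega
    have hsum : ∑ i : Fin n, (D ∩ Qrow φ.C j i).ncard ≤ 2 * n + 1 := by
      have hsplit : ∑ i ∈ Finset.univ.erase i0, (D ∩ Qrow φ.C j i).ncard
          + (D ∩ Qrow φ.C j i0).ncard = ∑ i : Fin n, (D ∩ Qrow φ.C j i).ncard :=
        Finset.sum_erase_add _ _ (Finset.mem_univ i0)
      have hb : ∑ i ∈ Finset.univ.erase i0, (D ∩ Qrow φ.C j i).ncard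
          ≤ (Finset.univ.erase i0).card • 2 :=
        Finset.sum_le_card_nsmul _ _ _ (fun x hx => by
          show (D ∩ Qrow φ.C j x).ncard ≤ 2
          exact hrow x (Finset.ne_of_mem_erase hx))
      rw [smul_eq_mul] at hb
      have hcard : (Finset.univ.erase i0).card = n - 1 := by
        rw [Finset.card_erase_of_mem (Finset.mem_univ _), Finset.card_univ, Fintype.card_fin]
      have hn : 1 ≤ n := i0.pos
      omega
    omega
  · push_neg at hcase
    have hsum : ∑ i : Fin n, (D ∩ Qrow φ.C j i).ncard ≤ 2 * n := by
      have hb : ∑ i : Fin n, (D ∩ Qrow φ.C j i).ncard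
          ≤ (Finset.univ : Finset (Fin n)).card • 2 :=
        Finset.sum_le_card_nsmul _ _ _ (fun x _ => by
          show (D ∩ Qrow φ.C j x).ncard ≤ 2
          have := hcase x
          omega)
      rw [smul_eq_mul] at hb
      rw [Finset.card_univ, Fintype.card_fin] at hb
      omega
    have hgad := gadgetA hD j
    omega
end

section
/- Let G be a finite simple graph, let d ≥ 1 and t ≥ 1 be integers, and let H(G,d,t) be the associated constructed hypergraph. For every maximal independent set I of G, the set F consisting of all vertices of V(G) ∖ I together with all vertices (S,a) with S ⊆ I, |S| = d, and 1 ≤ a ≤ t, is a minimal hitting set of H(G,d,t) of cardinality |V(G)| − |I| + t·C(|I|,d), where C(|I|,d) denotes the binomial coefficient. -/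
/-- `F` is a hitting set of the hypergraph with hyperedge family `E'`:
it intersects every hyperedge. -/
def HittingSet {W : Type*} (E' : Set (Set W)) (F : Set W) : Prop :=
  ∀ e ∈ E', (F ∩ e).Nonempty

/-- `F` is a minimal hitting set: it is a hitting set and no proper subset of it is. -/
def MinimalHittingSet {W : Type*} (E' : Set (Set W)) (F : Set W) : Prop :=
  HittingSet E' F ∧ ∀ F' : Set W, F' ⊂ F → ¬ HittingSet E' F'

/-- `I` is an independent set of `G` (as a `Finset`): no two of its vertices are adjacent. -/
def FinIndep {V : Type*} (G : SimpleGraph V) (I : Finset V) : Prop :=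
  ∀ u ∈ I, ∀ v ∈ I, ¬ G.Adj u v

/-- The vertex set of the hypergraph `H(G,d,t)`: the vertices of `G` together with the
pairs `(S, a)` where `S ⊆ V(G)` has `|S| = d` and `1 ≤ a ≤ t`. -/
abbrev HVert (V : Type*) (d t : ℕ) : Type _ :=
  V ⊕ ({S : Finset V // S.card = d} × Fin t)

/-- The hyperedges of `H(G,d,t)`: the set `{u, v}` for every edge `uv` of `G`, and the
set `S ∪ {(S, a)}` for every `d`-element subset `S` of `V(G)` and every `1 ≤ a ≤ t`. -/
def hEdges {V : Type*} (G : SimpleGraph V) (d t : ℕ) : Set (Set (HVert V d t)) :=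
  {e | (∃ u v : V, G.Adj u v ∧ e = {Sum.inl u, Sum.inl v}) ∨
       (∃ (S : {S : Finset V // S.card = d}) (a : Fin t),
          e = Sum.inl '' (↑S.1 : Set V) ∪ {Sum.inr (S, a)})}

/-!
The vertices of `V(G) ∖ I` hit the edges of `G` because `I` is independent, and a hyperedge
`S ∪ {(S, a)}` is hit either by a vertex of `S ∖ I` or, when `S ⊆ I`, by `(S, a)` itself.
Minimality holds because every element of `F` has a private hyperedge, meeting `F` in that
element only: `(S, a)` has `S ∪ {(S, a)}`, and `u ∉ I` has an edge `uv` with `v ∈ I`, which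
exists by maximality of `I`.
-/

theorem HittingSet.minimalHittingSet_of_forall_exists_inter_subset {W : Type*}
    {E' : Set (Set W)} {F : Set W} (hF : HittingSet E' F)
    (hprivate : ∀ x ∈ F, ∃ e ∈ E', F ∩ e ⊆ {x}) : MinimalHittingSet E' F := by
  refine ⟨hF, fun F' hF'F hF' => ?_⟩
  obtain ⟨x, hxF, hxF'⟩ := Set.exists_of_ssubset hF'F
  obtain ⟨e, he, hFe⟩ := hprivate x hxF
  obtain ⟨y, hyF', hye⟩ := hF' e he
  obtain rfl : y = x := hFe ⟨hF'F.subset hyF', hye⟩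
  exact hxF' hyF'

section FinIndep

variable {V : Type*} {G : SimpleGraph V} {I : Finset V}

theorem FinIndep.insert [DecidableEq V] (hI : FinIndep G I) {u : V}
    (hu : ∀ v ∈ I, ¬ G.Adj u v) : FinIndep G (insert u I) := by
  intro a ha b hb
  rcases Finset.mem_insert.1 ha with rfl | haI <;> rcases Finset.mem_insert.1 hb with rfl | hbI
  · exact G.irrefl
  · exact hu b hbI
  · exact fun hab => hu a haI hab.symm
  · exact hI a haI b hbI

theorem FinIndep.exists_adj_of_notMem [DecidableEq V] (hI : FinIndep G I)
    (hmax : ∀ J : Finset V, FinIndep G J → I ⊆ J → J = I) {u : V} (hu : u ∉ I) :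
    ∃ v ∈ I, G.Adj u v := by
  by_contra! hnadj
  have := hmax _ (hI.insert hnadj) (Finset.subset_insert u I)
  exact hu (this ▸ Finset.mem_insert_self u I)

end FinIndep

section HittingSetOfIndep

variable {V : Type*} {d t : ℕ} {I : Finset V}

def hittingSetOfIndep (I : Finset V) (d t : ℕ) : Set (HVert V d t) :=
  {x | (∃ u : V, u ∉ I ∧ x = Sum.inl u) ∨
     ∃ (S : {S : Finset V // S.card = d}) (a : Fin t), S.1 ⊆ I ∧ x = Sum.inr (S, a)}

@[simp]
theorem inl_mem_hittingSetOfIndep {u : V} :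
    (Sum.inl u : HVert V d t) ∈ hittingSetOfIndep I d t ↔ u ∉ I := by
  simp [hittingSetOfIndep]

@[simp]
theorem inr_mem_hittingSetOfIndep {S : {S : Finset V // S.card = d}} {a : Fin t} :
    (Sum.inr (S, a) : HVert V d t) ∈ hittingSetOfIndep I d t ↔ S.1 ⊆ I := by
  simp only [hittingSetOfIndep, Set.mem_ofPred_eq, reduceCtorEq, and_false, exists_false,
    Sum.inr.injEq, Prod.mk.injEq, false_or]
  exact ⟨by rintro ⟨_, _, h, rfl, -⟩; exact h, fun h => ⟨S, a, h, rfl, rfl⟩⟩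

theorem hittingSet_hittingSetOfIndep {G : SimpleGraph V} (hI : FinIndep G I) :
    HittingSet (hEdges G d t) (hittingSetOfIndep I d t) := by
  rintro e (⟨u, v, huv, rfl⟩ | ⟨S, a, rfl⟩)
  · by_cases hu : u ∈ I
    · exact ⟨Sum.inl v, by simpa using fun hv => hI u hu v hv huv, by simp⟩
    · exact ⟨Sum.inl u, by simpa using hu, by simp⟩
  · by_cases hS : S.1 ⊆ I
    · exact ⟨Sum.inr (S, a), by simpa using hS, by simp⟩
    · obtain ⟨s, hs, hsI⟩ := Finset.not_subset.1 hS
      exact ⟨Sum.inl s, by simpa using hsI, Or.inl ⟨s, hs, rfl⟩⟩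

theorem minimalHittingSet_hittingSetOfIndep [DecidableEq V] {G : SimpleGraph V}
    (hI : FinIndep G I) (hmax : ∀ J : Finset V, FinIndep G J → I ⊆ J → J = I) :
    MinimalHittingSet (hEdges G d t) (hittingSetOfIndep I d t) := by
  refine (hittingSet_hittingSetOfIndep hI).minimalHittingSet_of_forall_exists_inter_subset ?_
  rintro x (⟨u, hu, rfl⟩ | ⟨S, a, hSI, rfl⟩)
  · obtain ⟨v, hv, huv⟩ := hI.exists_adj_of_notMem hmax hu
    refine ⟨{Sum.inl u, Sum.inl v}, Or.inl ⟨u, v, huv, rfl⟩, ?_⟩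
    rintro y ⟨hy, rfl | rfl⟩
    · rfl
    · exact absurd hv (by simpa using hy)
  · refine ⟨Sum.inl '' (↑S.1 : Set V) ∪ {Sum.inr (S, a)}, Or.inr ⟨S, a, rfl⟩, ?_⟩
    rintro y ⟨hy, ⟨s, hs, rfl⟩ | hy'⟩
    · exact absurd (hSI hs) (by simpa using hy)
    · exact hy'

theorem hittingSetOfIndep_eq_disjSum [Fintype V] [DecidableEq V] :
    hittingSetOfIndep I d t =
      ↑(Iᶜ.disjSum ((I.powersetCard d).subtype (·.card = d) ×ˢ Finset.univ) :
        Finset (HVert V d t)) := by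
  ext (u | ⟨S, a⟩)
  · simp
  · simp [S.2]

theorem ncard_hittingSetOfIndep [Fintype V] [DecidableEq V] :
    (hittingSetOfIndep I d t).ncard = Fintype.card V - I.card + t * I.card.choose d := by
  rw [hittingSetOfIndep_eq_disjSum, Set.ncard_coe_finset, Finset.card_disjSum,
    Finset.card_compl, Finset.card_product, Finset.card_subtype, Finset.card_univ,
    Fintype.card_fin, Finset.filter_true_of_mem (fun S hS => (Finset.mem_powersetCard.1 hS).2),
    Finset.card_powersetCard, mul_comm]

end HittingSetOfIndep

theorem stmt13_general {V : Type*} [Fintype V] [DecidableEq V] (G : SimpleGraph V)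
    (d t : ℕ) (I : Finset V)
    (hI : FinIndep G I) (hmax : ∀ J : Finset V, FinIndep G J → I ⊆ J → J = I) :
    MinimalHittingSet (hEdges G d t)
        ({x | (∃ u : V, u ∉ I ∧ x = Sum.inl u) ∨
           ∃ (S : {S : Finset V // S.card = d}) (a : Fin t),
             S.1 ⊆ I ∧ x = Sum.inr (S, a)} : Set (HVert V d t)) ∧
      ({x | (∃ u : V, u ∉ I ∧ x = Sum.inl u) ∨
           ∃ (S : {S : Finset V // S.card = d}) (a : Fin t),
             S.1 ⊆ I ∧ x = Sum.inr (S, a)} : Set (HVert V d t)).ncard =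
        Fintype.card V - I.card + t * (I.card).choose d :=
  ⟨minimalHittingSet_hittingSetOfIndep hI hmax, ncard_hittingSetOfIndep⟩

theorem stmt13 {V : Type*} [Fintype V] [DecidableEq V] (G : SimpleGraph V)
    (d t : ℕ) (hd : 1 ≤ d) (ht : 1 ≤ t) (I : Finset V)
    (hI : FinIndep G I) (hmax : ∀ J : Finset V, FinIndep G J → I ⊆ J → J = I) :
    MinimalHittingSet (hEdges G d t)
        ({x | (∃ u : V, u ∉ I ∧ x = Sum.inl u) ∨
           ∃ (S : {S : Finset V // S.card = d}) (a : Fin t),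
             S.1 ⊆ I ∧ x = Sum.inr (S, a)} : Set (HVert V d t)) ∧
      ({x | (∃ u : V, u ∉ I ∧ x = Sum.inl u) ∨
           ∃ (S : {S : Finset V // S.card = d}) (a : Fin t),
             S.1 ⊆ I ∧ x = Sum.inr (S, a)} : Set (HVert V d t)).ncard =
        Fintype.card V - I.card + t * (I.card).choose d :=
  stmt13_general G d t I hI hmax
end

section
/- Let G be a finite simple graph, let d ≥ 1 and t ≥ 1 be integers, and let H(G,d,t) be the associated constructed hypergraph. Then every minimal hitting set F of H(G,d,t) satisfies |F| ≤ t·C(α(G),d) + |V(G)|, where α(G) is the maximum size of an independent set of G and C(α(G),d) denotes the binomial coefficient. -/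
/-!
Let `F` be a minimal hitting set of `H(G,d,t)` and let `J` be the set of vertices of `G`
not in `F`. Since `F` hits every edge of `G`, `J` is independent, so `|J| ≤ α(G)`.
A hyperedge-vertex `(S, a) ∈ F` needs a private hyperedge, which can only be `S ∪ {(S, a)}`;
hence `S ⊆ J`. So `F` has at most `t·C(|J|, d) ≤ t·C(α(G), d)` hyperedge-vertices,
and at most `|V(G)|` vertices of `G`.
-/

open Set

theorem MinimalHittingSet.exists_inter_eq_singleton {W : Type*} {E' : Set (Set W)}
    {F : Set W} (hF : MinimalHittingSet E' F) {x : W} (hx : x ∈ F) :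
    ∃ e ∈ E', F ∩ e = {x} := by
  have hsub : F \ {x} ⊂ F := sdiff_singleton_ssubset.2 hx
  obtain ⟨e, he, hempty⟩ : ∃ e ∈ E', ¬ ((F \ {x}) ∩ e).Nonempty := by
    simpa [HittingSet] using hF.2 _ hsub
  refine ⟨e, he, subset_antisymm (fun y hy => ?_) ?_⟩
  · by_contra hyx
    exact hempty ⟨y, ⟨hy.1, hyx⟩, hy.2⟩
  · obtain ⟨y, hyF, hye⟩ := hF.1 e he
    by_cases hyx : y = x
    · subst hyx
      exact singleton_subset_iff.2 ⟨hyF, hye⟩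
    · exact absurd ⟨y, ⟨hyF, hyx⟩, hye⟩ hempty

theorem Set.ncard_le_ncard_preimage_inl_add_ncard_preimage_inr {α β : Type*}
    (s : Set (α ⊕ β)) :
    s.ncard ≤ (Sum.inl ⁻¹' s).ncard + (Sum.inr ⁻¹' s).ncard := by
  conv_lhs => rw [← image_preimage_inl_union_image_preimage_inr s]
  refine (ncard_union_le _ _).trans_eq ?_
  rw [ncard_image_of_injective _ Sum.inl_injective,
    ncard_image_of_injective _ Sum.inr_injective]

namespace HVert

variable {V : Type*} [Fintype V] {G : SimpleGraph V} {d t : ℕ}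

noncomputable def missed (F : Set (HVert V d t)) : Finset V :=
  open scoped Classical in Finset.univ.filter fun v => Sum.inl v ∉ F

theorem mem_missed {F : Set (HVert V d t)} {v : V} :
    v ∈ missed F ↔ Sum.inl v ∉ F := by
  simp [missed]

theorem finIndep_missed {F : Set (HVert V d t)}
    (hF : HittingSet (hEdges G d t) F) : FinIndep G (missed F) := by
  intro u hu v hv huv
  obtain ⟨x, hxF, hx⟩ := hF _ (Or.inl ⟨u, v, huv, rfl⟩)
  rcases hx with rfl | rfl
  exacts [mem_missed.1 hu hxF, mem_missed.1 hv hxF]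

/-- The only hyperedge that can be private to `(S, a)` is `S ∪ {(S, a)}`. -/
theorem subset_missed_of_inr_mem {F : Set (HVert V d t)}
    (hF : MinimalHittingSet (hEdges G d t) F) {p : {S : Finset V // S.card = d} × Fin t}
    (hp : Sum.inr p ∈ F) : p.1.1 ⊆ missed F := by
  obtain ⟨e, he, hFe⟩ := hF.exists_inter_eq_singleton hp
  have hpe : Sum.inr p ∈ e := (hFe.symm.subset rfl).2
  rcases he with ⟨u, v, -, rfl⟩ | ⟨S, a, rfl⟩
  · simp at hpe
  · obtain rfl : p = (S, a) := by simpa using hpe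
    intro v hv
    refine mem_missed.2 fun hvF => ?_
    have hvFe :
        (Sum.inl v : HVert V d t) ∈ F ∩ (Sum.inl '' (S.1 : Set V) ∪ {Sum.inr (S, a)}) :=
      ⟨hvF, Or.inl ⟨v, hv, rfl⟩⟩
    rw [hFe] at hvFe
    exact Sum.inl_ne_inr hvFe

theorem ncard_preimage_inr_le {F : Set (HVert V d t)}
    (hF : MinimalHittingSet (hEdges G d t) F) :
    (Sum.inr ⁻¹' F).ncard ≤ t * (missed F).card.choose d := by
  classical
  calc (Sum.inr ⁻¹' F).ncard
      ≤ ((missed F).powersetCard d ×ˢ (Finset.univ : Finset (Fin t)) :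
          Set (Finset V × Fin t)).ncard := by
        refine ncard_le_ncard_of_injOn (fun p => (p.1.1, p.2)) ?_ ?_ (toFinite _)
        · intro p hp
          simpa using ⟨subset_missed_of_inr_mem hF hp, p.1.2⟩
        · rintro ⟨⟨S, hS⟩, a⟩ - ⟨⟨S', hS'⟩, a'⟩ - h
          simp_all
    _ = t * (missed F).card.choose d := by
        rw [← Finset.coe_product, ncard_coe_finset, Finset.card_product, Finset.card_powersetCard,
          Finset.card_univ, Fintype.card_fin, mul_comm]

end HVert

theorem stmt14_general {V : Type*} [Fintype V] (G : SimpleGraph V)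
    (d t : ℕ) (α : ℕ)
    (hα₂ : ∀ I : Finset V, FinIndep G I → I.card ≤ α)
    (F : Set (HVert V d t)) (hF : MinimalHittingSet (hEdges G d t) F) :
    F.ncard ≤ t * α.choose d + Fintype.card V := by
  have hmissed : (HVert.missed F).card ≤ α := hα₂ _ (HVert.finIndep_missed hF.1)
  have hinl : (Sum.inl ⁻¹' F).ncard ≤ Fintype.card V := by
    simpa using ncard_le_ncard (subset_univ (Sum.inl ⁻¹' F))
  calc F.ncard ≤ (Sum.inl ⁻¹' F).ncard + (Sum.inr ⁻¹' F).ncard :=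
        ncard_le_ncard_preimage_inl_add_ncard_preimage_inr F
    _ ≤ Fintype.card V + t * (HVert.missed F).card.choose d :=
        add_le_add hinl (HVert.ncard_preimage_inr_le hF)
    _ ≤ t * α.choose d + Fintype.card V := by
        rw [add_comm]
        gcongr

theorem stmt14 {V : Type*} [Fintype V] [DecidableEq V] (G : SimpleGraph V)
    (d t : ℕ) (hd : 1 ≤ d) (ht : 1 ≤ t)
    (α : ℕ) (hα₁ : ∃ I : Finset V, FinIndep G I ∧ I.card = α)
    (hα₂ : ∀ I : Finset V, FinIndep G I → I.card ≤ α)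
    (F : Set (HVert V d t)) (hF : MinimalHittingSet (hEdges G d t) F) :
    F.ncard ≤ t * α.choose d + Fintype.card V :=
  stmt14_general G d t α hα₂ F hF
end
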